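/- arXiv:0706.0192 — 7 statements merged into one kernel-verified Lean document; each statement's English description precedes it below -/
import Mathlib

section
/- If $f:\mathbb{R}^m \to \mathbb{R}$ is a nonnegative twice continuously differentiable function with second-order derivatives bounded by $M$, then $\sqrt{f}$ is Lipschitz continuous with Lipschitz constant $\sqrt{M}$. -/
/-!
Along a unit direction `η`, the function `φ t = f (z + t • η)` satisfies
`0 ≤ φ (t + h) ≤ φ t + φ' t * h + M / 2 * h ^ 2` for every `h`, so the discriminant of this
quadratic in `h` is nonpositive: `φ' t ^ 2 ≤ 2 * M * φ t`. Hence `‖Df‖ ≤ √(2 M f)`, which makes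
the gradient of `√(f + ε)` at most `√M` in norm; letting `ε → 0` gives the claim.
-/

open Real Set Filter Topology

lemma ConvexOn.add_mul_sub_le_of_hasDerivAt {S : Set ℝ} {f : ℝ → ℝ} {f' x y : ℝ}
    (hfc : ConvexOn ℝ S f) (hx : x ∈ S) (hy : y ∈ S) (hf : HasDerivAt f f' x) :
    f x + f' * (y - x) ≤ f y := by
  rcases lt_trichotomy x y with hxy | rfl | hyx
  · have := hfc.le_slope_of_hasDerivAt hx hy hxy hf
    rw [slope_def_field, le_div_iff₀ (sub_pos.2 hxy)] at this
    linarith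
  · simp
  · have := hfc.slope_le_of_hasDerivAt hy hx hyx hf
    rw [slope_def_field, div_le_iff₀ (sub_pos.2 hyx)] at this
    linarith

section OneDim

variable {φ φ' φ'' : ℝ → ℝ} {M : ℝ}

lemma le_add_mul_add_sq_of_hasDerivAt2_le (hφ : ∀ t, HasDerivAt φ (φ' t) t)
    (hφ' : ∀ t, HasDerivAt φ' (φ'' t) t) (hM : ∀ t, φ'' t ≤ M) (t h : ℝ) :
    φ (t + h) ≤ φ t + φ' t * h + M / 2 * h ^ 2 := by
  -- `s ↦ M/2 s² - φ s` is convex and lies above its tangent line at `t`.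
  have hψ : ∀ s, HasDerivAt (fun s => M / 2 * s ^ 2 - φ s) (M * s - φ' s) s := fun s =>
    (((hasDerivAt_pow 2 s).const_mul (M / 2)).sub (hφ s)).congr_deriv (by norm_num; ring)
  have hψ' : ∀ s, HasDerivAt (fun s => M * s - φ' s) (M - φ'' s) s := fun s =>
    (((hasDerivAt_id' s).const_mul M).sub (hφ' s)).congr_deriv (by ring)
  have hconv : ConvexOn ℝ univ (fun s => M / 2 * s ^ 2 - φ s) :=
    convexOn_of_hasDerivWithinAt2_nonneg convex_univ
      (fun s _ => (hψ s).continuousAt.continuousWithinAt)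
      (fun s _ => (hψ s).hasDerivWithinAt) (fun s _ => (hψ' s).hasDerivWithinAt)
      (fun s _ => sub_nonneg.2 (hM s))
  have := hconv.add_mul_sub_le_of_hasDerivAt (mem_univ t) (mem_univ (t + h)) (hψ t)
  linear_combination this

lemma sq_le_two_mul_mul_of_hasDerivAt2_le (hφ0 : ∀ t, 0 ≤ φ t)
    (hφ : ∀ t, HasDerivAt φ (φ' t) t) (hφ' : ∀ t, HasDerivAt φ' (φ'' t) t)
    (hM : ∀ t, φ'' t ≤ M) (t : ℝ) :
    φ' t ^ 2 ≤ 2 * M * φ t := by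
  have hquad : ∀ h, 0 ≤ M / 2 * (h * h) + φ' t * h + φ t := fun h => by
    linear_combination hφ0 (t + h) + le_add_mul_add_sq_of_hasDerivAt2_le hφ hφ' hM t h
  have := discrim_le_zero hquad
  rw [discrim] at this
  linarith

end OneDim

variable {E : Type*} [NormedAddCommGroup E] [NormedSpace ℝ E]

lemma hasDerivAt_comp_add_smul {g : E → ℝ} (hg : Differentiable ℝ g) (z η : E) (t : ℝ) :
    HasDerivAt (fun t => g (z + t • η)) (fderiv ℝ g (z + t • η) η) t :=
  (hg _).hasFDerivAt.comp_hasDerivAt t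
    (by simpa using ((hasDerivAt_id t).smul_const η).const_add z)

lemma norm_fderiv_le_sqrt_of_fderiv2_le {f : E → ℝ} {M : ℝ} (hf : ContDiff ℝ 2 f)
    (hf0 : ∀ z, 0 ≤ f z)
    (hM : ∀ z η, ‖η‖ = 1 → fderiv ℝ (fun y => fderiv ℝ f y η) z η ≤ M) (z : E) :
    ‖fderiv ℝ f z‖ ≤ √(2 * M * f z) := by
  refine ContinuousLinearMap.opNorm_le_of_unit_norm (sqrt_nonneg _) fun η hη => ?_
  have hdf : Differentiable ℝ (fun y => fderiv ℝ f y η) :=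
    ((hf.fderiv_right (m := 1) (by norm_num)).clm_apply contDiff_const).differentiable
      (by norm_num)
  have := sq_le_two_mul_mul_of_hasDerivAt2_le (fun t => hf0 (z + t • η))
    (hasDerivAt_comp_add_smul (hf.differentiable (by norm_num)) z η)
    (hasDerivAt_comp_add_smul hdf z η) (fun t => hM _ η hη) 0
  simp only [zero_smul, add_zero] at this
  exact abs_le_sqrt this

lemma lipschitzWith_sqrt_add_of_norm_fderiv_le {f : E → ℝ} {M ε : ℝ} (hf : Differentiable ℝ f)
    (hf0 : ∀ z, 0 ≤ f z) (hbound : ∀ z, ‖fderiv ℝ f z‖ ≤ √(2 * M * f z)) (hε : 0 < ε) :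
    LipschitzWith (√M).toNNReal (fun z => √(f z + ε)) := by
  have hpos : ∀ z, 0 < f z + ε := fun z => add_pos_of_nonneg_of_pos (hf0 z) hε
  have hderiv : ∀ z, HasFDerivAt (fun z => √(f z + ε))
      ((1 / (2 * √(f z + ε))) • fderiv ℝ f z) z := fun z =>
    ((hf z).hasFDerivAt.add_const ε).sqrt (hpos z).ne'
  refine lipschitzWith_of_nnnorm_fderiv_le (fun z => (hderiv z).differentiableAt) fun z => ?_
  rw [← NNReal.coe_le_coe, coe_nnnorm, Real.coe_toNNReal _ (sqrt_nonneg M), (hderiv z).fderiv,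
    norm_smul, norm_div, norm_one, Real.norm_of_nonneg (by positivity), one_div_mul_eq_div,
    div_le_iff₀ (mul_pos two_pos (sqrt_pos.2 (hpos z)))]
  have h2f : √(2 * f z) ≤ 2 * √(f z + ε) := by
    rw [sqrt_le_left (by positivity), mul_pow, sq_sqrt (hpos z).le]
    linarith [hf0 z]
  calc ‖fderiv ℝ f z‖ ≤ √(2 * M * f z) := hbound z
    _ = √M * √(2 * f z) := by rw [← sqrt_mul' M (by linarith [hf0 z])]; ring_nf
    _ ≤ √M * (2 * √(f z + ε)) := mul_le_mul_of_nonneg_left h2f (sqrt_nonneg M)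

lemma lipschitzWith_sqrt_of_norm_fderiv_le {f : E → ℝ} {M : ℝ} (hf : Differentiable ℝ f)
    (hf0 : ∀ z, 0 ≤ f z) (hbound : ∀ z, ‖fderiv ℝ f z‖ ≤ √(2 * M * f z)) :
    LipschitzWith (√M).toNNReal (fun z => √(f z)) := by
  have hlim : Tendsto (fun ε => fun z => √(f z + ε)) (𝓝[>] 0) (𝓝 fun z => √(f z)) :=
    tendsto_pi_nhds.2 fun z => by
      simpa using (((continuous_const_add (f z)).sqrt).tendsto 0).mono_left nhdsWithin_le_nhds
  exact (isClosed_setOfPred_lipschitzWith _).mem_of_tendsto hlim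
    (eventually_nhdsWithin_of_forall fun ε hε =>
      lipschitzWith_sqrt_add_of_norm_fderiv_le hf hf0 hbound hε)

/-- If `f : ℝ^m → ℝ` is nonnegative, twice continuously differentiable, with all
second-order directional derivatives bounded by `M`, then `√f` is Lipschitz with
constant `√M`. -/
theorem stmt_1 {m : ℕ} (f : EuclideanSpace ℝ (Fin m) → ℝ) (M : ℝ)
    (hf : ContDiff ℝ 2 f) (hf0 : ∀ z, 0 ≤ f z)
    (hM : ∀ z η, ‖η‖ = 1 → |fderiv ℝ (fun y => fderiv ℝ f y η) z η| ≤ M) :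
    LipschitzWith (Real.toNNReal (Real.sqrt M)) (fun y => Real.sqrt (f y)) :=
  lipschitzWith_sqrt_of_norm_fderiv_le (hf.differentiable (by norm_num)) hf0
    (norm_fderiv_le_sqrt_of_fderiv2_le hf hf0 fun z η hη => (le_abs_self _).trans (hM z η hη))
end

section
/- Let $P \subset \mathbb{R}^d$ be a compact convex polytope with vertices $a_1,\dots,a_n$ ($n\ge 2$) and nonempty interior $P^o$. For $x \in P^o$ define $U(x) = \max\{\sum_{i=1}^n \ln p_i : p_i > 0, \sum_i p_i = 1, \sum_i p_i a_i = x\}$. Then $U$ is strictly concave on $P^o$. -/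
open Finset

/-- The entropy function of a polytope with vertices `a 1, …, a n`:
`U(x) = sup { ∑ᵢ ln pᵢ : pᵢ > 0, ∑ pᵢ = 1, ∑ pᵢ aᵢ = x }`. -/
noncomputable def entropyU {d n : ℕ} (a : Fin n → EuclideanSpace ℝ (Fin d))
    (x : EuclideanSpace ℝ (Fin d)) : ℝ :=
  sSup {s | ∃ p : Fin n → ℝ, (∀ i, 0 < p i) ∧ ∑ i, p i = 1 ∧
    ∑ i, p i • a i = x ∧ s = ∑ i, Real.log (p i)}

/-!
If `p` and `q` are optimal weights for `x ≠ y`, then `t • p + s • q` represents `t • x + s • y`,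
and `p ≠ q`; strict concavity of `log` gives
`U (t • x + s • y) ≥ ∑ log (t pᵢ + s qᵢ) > t U x + s U y`.
The maximum is attained because `∏ pᵢ = exp (∑ log pᵢ)` is continuous on the compact set of
nonnegative weights and positive somewhere, so it is maximized at positive weights. Positive
weights exist at an interior point `x` because `x` lies strictly between a point of the hull and
the centroid of the vertices.
-/

open Set Filter Topology

section

variable {ι E : Type*} [Fintype ι] [AddCommGroup E] [Module ℝ E]

lemma convexHull_range_eq_image_stdSimplex (a : ι → E) :
    convexHull ℝ (range a) = (fun w => ∑ i, w i • a i) '' stdSimplex ℝ ι := by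
  classical
  rw [← convexHull_basis_eq_stdSimplex]
  have h := (Fintype.linearCombination ℝ a).image_convexHull
    (range fun i j : ι => if i = j then (1 : ℝ) else 0)
  have hbasis : (Fintype.linearCombination ℝ a ∘ fun i j : ι => if i = j then (1 : ℝ) else 0)
      = a := by
    ext i
    simp [Fintype.linearCombination_apply]
  rw [← range_comp, hbasis] at h
  exact h.symm

def positiveWeights (a : ι → E) (x : E) : Set (ι → ℝ) :=
  {p | (∀ i, 0 < p i) ∧ ∑ i, p i = 1 ∧ ∑ i, p i • a i = x}

lemma smul_add_smul_mem_positiveWeights {a : ι → E} {x y : E} {p q : ι → ℝ}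
    (hp : p ∈ positiveWeights a x) (hq : q ∈ positiveWeights a y) {t s : ℝ}
    (ht : 0 ≤ t) (hs : 0 ≤ s) (hts : t + s = 1) :
    t • p + s • q ∈ positiveWeights a (t • x + s • y) := by
  obtain ⟨hp₀, hp₁, hpx⟩ := hp
  obtain ⟨hq₀, hq₁, hqy⟩ := hq
  refine ⟨fun i => convex_Ioi (0 : ℝ) (hp₀ i) (hq₀ i) ht hs hts, ?_, ?_⟩
  · simp [sum_add_distrib, ← mul_sum, hp₁, hq₁, hts]
  · simp [add_smul, mul_smul, sum_add_distrib, ← smul_sum, hpx, hqy]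

lemma positiveWeights_nonempty_of_mem_interior [TopologicalSpace E] [ContinuousAdd E]
    [ContinuousSMul ℝ E] {a : ι → E} {x : E} (hx : x ∈ interior (convexHull ℝ (range a))) :
    (positiveWeights a x).Nonempty := by
  obtain ⟨-, i₀, -⟩ := convexHull_nonempty_iff.mp ⟨x, interior_subset hx⟩
  have hcard : (0 : ℝ) < Fintype.card ι := Nat.cast_pos.mpr (Fintype.card_pos_iff.mpr ⟨i₀⟩)
  set u : ι → ℝ := fun _ => (Fintype.card ι : ℝ)⁻¹
  set c : E := ∑ i, u i • a i
  have hline : Tendsto (fun θ : ℝ => x + θ • (x - c)) (𝓝 0) (𝓝 x) :=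
    (by fun_prop : Continuous fun θ : ℝ => x + θ • (x - c)).tendsto' 0 x (by simp)
  obtain ⟨θ, hy, hθ⟩ := ((hline.eventually (mem_interior_iff_mem_nhds.mp hx)).filter_mono
    nhdsWithin_le_nhds |>.and (self_mem_nhdsWithin (s := Ioi (0 : ℝ)))).exists
  rw [convexHull_range_eq_image_stdSimplex] at hy
  obtain ⟨q, ⟨hq₀, hq₁⟩, hqy⟩ := hy
  -- `x = (1 + θ)⁻¹ • (x + θ • (x - c)) + (θ / (1 + θ)) • c`
  refine ⟨(1 + θ)⁻¹ • q + (θ / (1 + θ)) • u, fun i => ?_, ?_, ?_⟩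
  · have hqi := hq₀ i
    simp only [Pi.add_apply, Pi.smul_apply, smul_eq_mul, u]
    positivity
  · simp only [Pi.add_apply, Pi.smul_apply, smul_eq_mul, sum_add_distrib, ← mul_sum, hq₁, u,
      sum_const, card_univ, nsmul_eq_mul]
    field_simp
  · simp only [Pi.add_apply, Pi.smul_apply, smul_eq_mul, add_smul, mul_smul, sum_add_distrib,
      ← smul_sum, hqy]
    match_scalars
    · field_simp
    · field_simp
      ring

lemma exists_isMaxOn_sum_log_positiveWeights [TopologicalSpace E] [ContinuousAdd E]
    [ContinuousSMul ℝ E] [T1Space E] {a : ι → E} {x : E} (hx : (positiveWeights a x).Nonempty) :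
    ∃ p ∈ positiveWeights a x,
      IsMaxOn (fun p => ∑ i, Real.log (p i)) (positiveWeights a x) p := by
  obtain ⟨p₀, hp₀⟩ := hx
  set K := stdSimplex ℝ ι ∩ (fun p => ∑ i, p i • a i) ⁻¹' {x}
  have hK : IsCompact K :=
    (isCompact_stdSimplex ℝ ι).inter_right (isClosed_singleton.preimage (by fun_prop))
  have hsub : positiveWeights a x ⊆ K := fun p hp => ⟨⟨fun i => (hp.1 i).le, hp.2.1⟩, hp.2.2⟩
  obtain ⟨p, hpK, hmax⟩ := hK.exists_isMaxOn ⟨p₀, hsub hp₀⟩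
    (continuous_finsetProd univ fun i _ => continuous_apply i).continuousOn
  have hprod : 0 < ∏ i, p i := (prod_pos fun i _ => hp₀.1 i).trans_le (hmax (hsub hp₀))
  have hp_pos : ∀ i, 0 < p i := fun i =>
    (hpK.1.1 i).lt_of_ne fun h => hprod.ne' (prod_eq_zero (mem_univ i) h.symm)
  refine ⟨p, ⟨hp_pos, hpK.1.2, hpK.2⟩, fun q hq => ?_⟩
  change ∑ i, Real.log (q i) ≤ ∑ i, Real.log (p i)
  rw [← Real.log_prod fun i _ => (hq.1 i).ne', ← Real.log_prod fun i _ => (hp_pos i).ne']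
  exact Real.log_le_log (prod_pos fun i _ => hq.1 i) (hmax (hsub hq))

end

lemma StrictConcaveOn.sum_comp_pi {ι : Type*} [Fintype ι] {s : Set ℝ} {f : ℝ → ℝ}
    (hf : StrictConcaveOn ℝ s f) :
    StrictConcaveOn ℝ (univ.pi fun _ : ι => s) (fun p => ∑ i, f (p i)) := by
  refine ⟨convex_pi fun i _ => hf.1, fun p hp q hq hpq t u ht hu htu => ?_⟩
  obtain ⟨i, hi⟩ := Function.ne_iff.mp hpq
  simp only [smul_eq_mul, mul_sum, ← sum_add_distrib, Pi.add_apply, Pi.smul_apply]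
  exact sum_lt_sum
    (fun j _ => hf.concaveOn.2 (hp j trivial) (hq j trivial) ht.le hu.le htu)
    ⟨i, mem_univ i, hf.2 (hp i trivial) (hq i trivial) hi ht hu htu⟩

section

variable {d n : ℕ} {a : Fin n → EuclideanSpace ℝ (Fin d)} {x : EuclideanSpace ℝ (Fin d)}
  {p : Fin n → ℝ}

lemma entropyU_eq_of_isMaxOn (hp : p ∈ positiveWeights a x)
    (hmax : IsMaxOn (fun p => ∑ i, Real.log (p i)) (positiveWeights a x) p) :
    entropyU a x = ∑ i, Real.log (p i) := by
  refine IsGreatest.csSup_eq ⟨⟨p, hp.1, hp.2.1, hp.2.2, rfl⟩, ?_⟩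
  rintro _ ⟨q, hq₀, hq₁, hqx, rfl⟩
  exact hmax ⟨hq₀, hq₁, hqx⟩

lemma sum_log_le_entropyU (hp : p ∈ positiveWeights a x) :
    ∑ i, Real.log (p i) ≤ entropyU a x := by
  obtain ⟨q, hq, hmax⟩ := exists_isMaxOn_sum_log_positiveWeights ⟨p, hp⟩
  rw [entropyU_eq_of_isMaxOn hq hmax]
  exact hmax hp

end

theorem stmt_5_general {d n : ℕ} (a : Fin n → EuclideanSpace ℝ (Fin d))
    (P : Set (EuclideanSpace ℝ (Fin d)))
    (hP : P = convexHull ℝ (Set.range a)) :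
    StrictConcaveOn ℝ (interior P) (entropyU a) := by
  subst hP
  refine ⟨(convex_convexHull ℝ _).interior, fun x hx y hy hxy t s ht hs hts => ?_⟩
  obtain ⟨p, hp, hpmax⟩ :=
    exists_isMaxOn_sum_log_positiveWeights (positiveWeights_nonempty_of_mem_interior hx)
  obtain ⟨q, hq, hqmax⟩ :=
    exists_isMaxOn_sum_log_positiveWeights (positiveWeights_nonempty_of_mem_interior hy)
  have hpq : p ≠ q := by
    rintro rfl
    exact hxy (hp.2.2.symm.trans hq.2.2)
  rw [entropyU_eq_of_isMaxOn hp hpmax, entropyU_eq_of_isMaxOn hq hqmax]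
  calc t • ∑ i, Real.log (p i) + s • ∑ i, Real.log (q i)
      < ∑ i, Real.log ((t • p + s • q) i) :=
        strictConcaveOn_log_Ioi.sum_comp_pi.2 (fun i _ => hp.1 i) (fun i _ => hq.1 i) hpq ht hs hts
    _ ≤ entropyU a (t • x + s • y) :=
        sum_log_le_entropyU (smul_add_smul_mem_positiveWeights hp hq ht.le hs.le hts)

/-- The entropy function `U` is strictly concave on the interior of the polytope. -/
theorem stmt_5 {d n : ℕ} (hn : 2 ≤ n) (a : Fin n → EuclideanSpace ℝ (Fin d))
    (ha : Function.Injective a)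
    (P : Set (EuclideanSpace ℝ (Fin d)))
    (hP : P = convexHull ℝ (Set.range a))
    (hvert : ∀ i, a i ∈ Set.extremePoints ℝ P)
    (hint : (interior P).Nonempty) :
    StrictConcaveOn ℝ (interior P) (entropyU a) :=
  stmt_5_general a P hP
end

section
/- With $U$ and the entropy-maximizing weights $p_k(x)$ as above on the interior $P^o$ of a polytope with vertices $a_1,\dots,a_n$, the functions $p_1,\dots,p_n$ are continuous on $P^o$. -/
open Finset

/-! The maximizer at `x` is unique because `q ↦ ∑ log qᵢ` is strictly concave on the convex
set of admissible weights. The value `U` is lower semicontinuous once the `aᵢ` span affinely: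
a linear right inverse `δ` of `w ↦ (∑ wᵢ aᵢ, ∑ wᵢ)` turns admissible weights `q` at `x` into
admissible weights `q + δ (y - x)` at nearby `y`. So near `x` the maximizers lie in the compact
simplex with entropy bounded below, hence with every coordinate at least `exp (U x - 1)`; any
cluster point is then admissible at `x` with entropy at least `U x`, i.e. it is the maximizer. -/

open Filter Topology Real

lemma log_add_log_le_two_mul_log_avg {s t : ℝ} (hs : 0 < s) (ht : 0 < t) :
    log s + log t ≤ 2 * log ((s + t) / 2) := by
  rw [← log_mul hs.ne' ht.ne', ← Nat.cast_ofNat, ← log_pow]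
  exact log_le_log (by positivity) (by nlinarith [sq_nonneg (s - t)])

lemma log_add_log_lt_two_mul_log_avg {s t : ℝ} (hs : 0 < s) (ht : 0 < t) (hst : s ≠ t) :
    log s + log t < 2 * log ((s + t) / 2) := by
  rw [← log_mul hs.ne' ht.ne', ← Nat.cast_ofNat, ← log_pow]
  exact log_lt_log (by positivity) (by nlinarith [sq_pos_of_ne_zero (sub_ne_zero.2 hst)])

lemma exists_linearMap_sum_eq_zero_and_sum_smul_eq {k E ι : Type*} [Field k] [AddCommGroup E]
    [Module k E] [Fintype ι] {a : ι → E} (hspan : affineSpan k (Set.range a) = ⊤) :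
    ∃ δ : E →ₗ[k] ι → k, ∀ y, ∑ i, δ y i = 0 ∧ ∑ i, δ y i • a i = y := by
  have hcomb : ∀ z : E, ∃ w : ι → k, ∑ i, w i = 1 ∧ ∑ i, w i • a i = z := by
    intro z
    obtain ⟨w, hw, rfl⟩ := eq_affineCombination_of_mem_affineSpan_of_fintype
      (hspan ▸ AffineSubspace.mem_top k E z)
    exact ⟨w, hw, (affineCombination_eq_linear_combination _ _ _ hw).symm⟩
  let T : (ι → k) →ₗ[k] E × k :=
    (Fintype.linearCombination k a).prod (Fintype.linearCombination k 1)
  have hT : ∀ w, T w = (∑ i, w i • a i, ∑ i, w i) := fun w => by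
    simp [T, Fintype.linearCombination_apply]
  have hsurj : Function.Surjective T := by
    rintro ⟨y, c⟩
    obtain ⟨w, hw1, hwa⟩ := hcomb y
    obtain ⟨u, hu1, hua⟩ := hcomb 0
    refine ⟨w + (c - 1) • u, ?_⟩
    simp only [hT, Pi.add_apply, Pi.smul_apply, smul_eq_mul, add_smul, mul_smul,
      sum_add_distrib, ← smul_sum, ← mul_sum, hwa, hua, hw1, hu1]
    simp
  obtain ⟨S, hS⟩ := T.exists_rightInverse_of_surjective (LinearMap.range_eq_top.2 hsurj)
  refine ⟨S ∘ₗ LinearMap.inl k E k, fun y => ?_⟩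
  have h := LinearMap.ext_iff.1 hS (y, 0)
  simp only [LinearMap.comp_apply, LinearMap.id_apply, hT, Prod.ext_iff] at h
  exact ⟨h.2, h.1⟩

section Entropy

variable {d n : ℕ} {a : Fin n → EuclideanSpace ℝ (Fin d)} {x : EuclideanSpace ℝ (Fin d)}
  {q q' : Fin n → ℝ}

def IsPosBarycentric (a : Fin n → EuclideanSpace ℝ (Fin d)) (x : EuclideanSpace ℝ (Fin d))
    (q : Fin n → ℝ) : Prop :=
  (∀ i, 0 < q i) ∧ ∑ i, q i = 1 ∧ ∑ i, q i • a i = x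

def IsEntropyMaximizer (a : Fin n → EuclideanSpace ℝ (Fin d)) (x : EuclideanSpace ℝ (Fin d))
    (q : Fin n → ℝ) : Prop :=
  IsPosBarycentric a x q ∧ ∑ i, log (q i) = entropyU a x

namespace IsPosBarycentric

lemma log_nonpos (hq : IsPosBarycentric a x q) (i : Fin n) : log (q i) ≤ 0 :=
  Real.log_nonpos (hq.1 i).le <| hq.2.1 ▸ single_le_sum (fun l _ => (hq.1 l).le) (mem_univ i)

lemma sum_log_le_log (hq : IsPosBarycentric a x q) (j : Fin n) :
    ∑ i, log (q i) ≤ log (q j) := by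
  rw [← sum_erase_add _ _ (mem_univ j)]
  linarith [sum_nonpos fun i (_ : i ∈ univ.erase j) => hq.log_nonpos i]

lemma avg (hq : IsPosBarycentric a x q) (hq' : IsPosBarycentric a x q') :
    IsPosBarycentric a x fun i => (q i + q' i) / 2 := by
  obtain ⟨hpos, hsum, hbary⟩ := hq
  obtain ⟨hpos', hsum', hbary'⟩ := hq'
  refine ⟨fun i => by linarith [hpos i, hpos' i], ?_, ?_⟩
  · rw [← sum_div, sum_add_distrib, hsum, hsum']
    norm_num
  · calc ∑ i, ((q i + q' i) / 2) • a i
        = (2 : ℝ)⁻¹ • (∑ i, q i • a i + ∑ i, q' i • a i) := by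
          rw [← sum_add_distrib, smul_sum]
          exact sum_congr rfl fun i _ => by module
      _ = x := by rw [hbary, hbary']; module

end IsPosBarycentric

lemma bddAbove_entropy_set (a : Fin n → EuclideanSpace ℝ (Fin d))
    (x : EuclideanSpace ℝ (Fin d)) :
    BddAbove {s | ∃ p : Fin n → ℝ, (∀ i, 0 < p i) ∧ ∑ i, p i = 1 ∧
      ∑ i, p i • a i = x ∧ s = ∑ i, Real.log (p i)} := by
  refine ⟨0, ?_⟩
  rintro s ⟨q, hpos, hsum, hbary, rfl⟩
  exact sum_nonpos fun i _ => IsPosBarycentric.log_nonpos ⟨hpos, hsum, hbary⟩ i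

lemma IsPosBarycentric.sum_log_le_entropyU (hq : IsPosBarycentric a x q) :
    ∑ i, log (q i) ≤ entropyU a x :=
  le_csSup (bddAbove_entropy_set a x) ⟨q, hq.1, hq.2.1, hq.2.2, rfl⟩

lemma IsPosBarycentric.eq_of_entropyU_le (hq : IsPosBarycentric a x q)
    (hq' : IsPosBarycentric a x q') (hU : entropyU a x ≤ ∑ i, log (q i))
    (hU' : entropyU a x ≤ ∑ i, log (q' i)) : q = q' := by
  by_contra hne
  obtain ⟨j, hj⟩ := Function.ne_iff.1 hne
  have hlt : ∑ i, (log (q i) + log (q' i)) < ∑ i, 2 * log ((q i + q' i) / 2) :=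
    sum_lt_sum (fun i _ => log_add_log_le_two_mul_log_avg (hq.1 i) (hq'.1 i))
      ⟨j, mem_univ j, log_add_log_lt_two_mul_log_avg (hq.1 j) (hq'.1 j) hj⟩
  rw [sum_add_distrib, ← mul_sum] at hlt
  linarith [(hq.avg hq').sum_log_le_entropyU]

lemma lowerSemicontinuousAt_entropyU (hspan : affineSpan ℝ (Set.range a) = ⊤)
    (hx : ∃ q, IsPosBarycentric a x q) : LowerSemicontinuousAt (entropyU a) x := by
  intro c hc
  obtain ⟨_, ⟨q, hpos, hsum, hbary, rfl⟩, hcq⟩ := exists_lt_of_lt_csSup (by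
    obtain ⟨q₀, hq₀⟩ := hx
    exact ⟨_, q₀, hq₀.1, hq₀.2.1, hq₀.2.2, rfl⟩) hc
  obtain ⟨δ, hδ⟩ := exists_linearMap_sum_eq_zero_and_sum_smul_eq hspan
  set r : EuclideanSpace ℝ (Fin d) → Fin n → ℝ := fun y i => q i + δ (y - x) i
  have hr : Tendsto r (𝓝 x) (𝓝 q) := by
    have : Continuous r := by
      have := δ.continuous_of_finiteDimensional
      fun_prop
    simpa [r] using this.tendsto x
  have hr_pos : ∀ᶠ y in 𝓝 x, ∀ i, 0 < r y i :=
    eventually_all.2 fun i => (tendsto_pi_nhds.1 hr i).eventually_const_lt (hpos i)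
  have hr_log : ∀ᶠ y in 𝓝 x, c < ∑ i, log (r y i) :=
    (tendsto_finsetSum _ fun i _ =>
      ((continuousAt_log (hpos i).ne').tendsto.comp (tendsto_pi_nhds.1 hr i))).eventually_const_lt
      hcq
  filter_upwards [hr_pos, hr_log] with y hy_pos hy_log
  refine hy_log.trans_le (IsPosBarycentric.sum_log_le_entropyU ⟨hy_pos, ?_, ?_⟩)
  · simp only [r, sum_add_distrib, hsum, (hδ _).1, add_zero]
  · simp only [r, add_smul, sum_add_distrib, hbary, (hδ _).2]
    abel

end Entropy

section Continuity

variable {d n : ℕ} {a : Fin n → EuclideanSpace ℝ (Fin d)} {x : EuclideanSpace ℝ (Fin d)}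
  {q : Fin n → ℝ}

lemma IsEntropyMaximizer.eq_of_tendsto (hspan : affineSpan ℝ (Set.range a) = ⊤)
    (hx : IsEntropyMaximizer a x q) {F : Filter (EuclideanSpace ℝ (Fin d))} [F.NeBot]
    (hF : F ≤ 𝓝 x) {p : EuclideanSpace ℝ (Fin d) → Fin n → ℝ}
    (hp : ∀ᶠ y in F, IsEntropyMaximizer a y (p y)) {L : Fin n → ℝ}
    (hL : Tendsto p F (𝓝 L)) : L = q := by
  have hLi : ∀ i, Tendsto (fun y => p y i) F (𝓝 (L i)) := tendsto_pi_nhds.1 hL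
  have hU : ∀ c < entropyU a x, ∀ᶠ y in F, c < ∑ i, log (p y i) := fun c hc =>
    (hp.and (hF (lowerSemicontinuousAt_entropyU hspan ⟨q, hx.1⟩ c hc))).mono
      fun y ⟨hy, hcy⟩ => hy.2 ▸ hcy
  have hpos : ∀ i, 0 < L i := fun i => (exp_pos (entropyU a x - 1)).trans_le <|
    ge_of_tendsto (hLi i) <| ((hU _ (sub_one_lt _)).and hp).mono fun y ⟨hc, hy⟩ =>
      ((lt_log_iff_exp_lt (hy.1.1 i)).1 (hc.trans_le (hy.1.sum_log_le_log i))).le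
  have hsum : ∑ i, L i = 1 := tendsto_nhds_unique (tendsto_finsetSum _ fun i _ => hLi i)
    (tendsto_const_nhds.congr' (hp.mono fun y hy => hy.1.2.1.symm))
  have hbary : ∑ i, L i • a i = x :=
    tendsto_nhds_unique (tendsto_finsetSum _ fun i _ => (hLi i).smul_const (a i))
      ((tendsto_id'.2 hF).congr' (hp.mono fun y hy => hy.1.2.2.symm))
  have hlog : Tendsto (fun y => ∑ i, log (p y i)) F (𝓝 (∑ i, log (L i))) :=
    tendsto_finsetSum _ fun i _ => (continuousAt_log (hpos i).ne').tendsto.comp (hLi i)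
  have hmax : entropyU a x ≤ ∑ i, log (L i) := le_of_forall_lt_imp_le_of_dense fun c hc =>
    ge_of_tendsto hlog ((hU c hc).mono fun _ => le_of_lt)
  exact IsPosBarycentric.eq_of_entropyU_le ⟨hpos, hsum, hbary⟩ hx.1 hmax hx.2.ge

theorem continuousOn_of_isEntropyMaximizer (hspan : affineSpan ℝ (Set.range a) = ⊤)
    {S : Set (EuclideanSpace ℝ (Fin d))} {p : EuclideanSpace ℝ (Fin d) → Fin n → ℝ}
    (hp : ∀ x ∈ S, IsEntropyMaximizer a x (p x)) : ContinuousOn p S := by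
  intro x hx
  have hmem : ∀ᶠ y in 𝓝[S] x, p y ∈ stdSimplex ℝ (Fin n) :=
    eventually_nhdsWithin_of_forall fun y hy =>
      ⟨fun i => ((hp y hy).1.1 i).le, (hp y hy).1.2.1⟩
  refine (isCompact_stdSimplex ℝ (Fin n)).tendsto_nhds_of_unique_mapClusterPt hmem
    fun L _ hL => ?_
  obtain ⟨U, hUS, hUL⟩ := mapClusterPt_iff_ultrafilter.1 hL
  exact (hp x hx).eq_of_tendsto hspan (hUS.trans nhdsWithin_le_nhds)
    (hUS (eventually_nhdsWithin_of_forall hp)) hUL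

end Continuity

theorem stmt_7_general {d n : ℕ} (a : Fin n → EuclideanSpace ℝ (Fin d))
    (P : Set (EuclideanSpace ℝ (Fin d)))
    (hP : P = convexHull ℝ (Set.range a))
    (hint : (interior P).Nonempty)
    (p : EuclideanSpace ℝ (Fin d) → Fin n → ℝ)
    (hp : ∀ x ∈ interior P, (∀ i, 0 < p x i) ∧ ∑ i, p x i = 1 ∧
      ∑ i, p x i • a i = x ∧ ∑ i, Real.log (p x i) = entropyU a x) :
    ∀ k, ContinuousOn (fun x => p x k) (interior P) := by
  have hspan : affineSpan ℝ (Set.range a) = ⊤ :=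
    affineSpan_eq_top_of_nonempty_interior (hP ▸ hint)
  have hmax : ∀ x ∈ interior P, IsEntropyMaximizer a x (p x) := fun x hx =>
    let ⟨hpos, hsum, hbary, hU⟩ := hp x hx
    ⟨⟨hpos, hsum, hbary⟩, hU⟩
  exact fun k => (continuous_apply k).comp_continuousOn
    (continuousOn_of_isEntropyMaximizer hspan hmax)

/-- The entropy-maximizing weights `p k` are continuous on the interior of `P`. -/
theorem stmt_7 {d n : ℕ} (hn : 2 ≤ n) (a : Fin n → EuclideanSpace ℝ (Fin d))
    (ha : Function.Injective a)
    (P : Set (EuclideanSpace ℝ (Fin d)))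
    (hP : P = convexHull ℝ (Set.range a))
    (hvert : ∀ i, a i ∈ Set.extremePoints ℝ P)
    (hint : (interior P).Nonempty)
    (p : EuclideanSpace ℝ (Fin d) → Fin n → ℝ)
    (hp : ∀ x ∈ interior P, (∀ i, 0 < p x i) ∧ ∑ i, p x i = 1 ∧
      ∑ i, p x i • a i = x ∧ ∑ i, Real.log (p x i) = entropyU a x) :
    ∀ k, ContinuousOn (fun x => p x k) (interior P) :=
  stmt_7_general a P hP hint p hp
end

section
/- Let $U$ be the entropy function on the interior $P^o$ of a polytope with vertices $a_1,\dots,a_n$ spanning $\mathbb{R}^d$, and $p_k(x)$ the unique maximizing weights. Then $U$ is differentiable on $P^o$, and for every $x\in P^o$ and every representation $\xi = \sum_k q_k (x - a_k)$ with real coefficients $q_k$, one has $\sum_k q_k / p_k(x) = n \sum_k q_k - (\xi, \nabla U(x))$. -/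
open Finset

/-! At an interior point `x` with maximizing weights `p`, the first-order condition says that
`∑ r i / p i = 0` for every `r` with `∑ r = 0` and `∑ r • a = 0`, so `q ↦ ∑ q i / p i` only
depends on `(∑ q, ∑ q • a)`. Since the `a i` affinely span the space, each `v` is `∑ G v • a` for
zero-sum weights `G v` depending linearly on `v`, and `L v = ∑ G v i / p i` is the gradient:
concavity of `log` puts `U` below `U x + L (y - x)`, and the admissible weights `p + G (y - x)`
give a smooth minorant of `U` touching it at `x` with derivative `L`. The formula follows by
comparing `q` with the weights `(∑ q) • p - G ξ`, which have the same total and barycentre. -/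

open Filter Topology Asymptotics

theorem HasFDerivAt.of_minorant_of_le_tangent {E : Type*} [NormedAddCommGroup E] [NormedSpace ℝ E]
    {f g : E → ℝ} {L : E →L[ℝ] ℝ} {x : E} (hg : HasFDerivAt g L x) (hgx : g x = f x)
    (hgf : ∀ᶠ y in 𝓝 x, g y ≤ f y) (hfL : ∀ᶠ y in 𝓝 x, f y ≤ f x + L (y - x)) :
    HasFDerivAt f L x := by
  refine HasFDerivAt.of_isLittleO (IsBigO.trans_isLittleO (IsBigO.of_bound 1 ?_) hg.isLittleO)
  filter_upwards [hgf, hfL] with y hgy hfy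
  rw [one_mul, Real.norm_eq_abs, Real.norm_eq_abs]
  exact abs_le_abs_of_nonpos (by linarith) (by linarith)

section MaxLogSum

variable {ι E : Type*} [Fintype ι] [AddCommGroup E] [Module ℝ E]

-- `entropyU a` unfolds to `maxLogSum a` with `ι = Fin n` and `E = EuclideanSpace ℝ (Fin d)`.
noncomputable def maxLogSum (a : ι → E) (x : E) : ℝ :=
  sSup {s | ∃ p : ι → ℝ, (∀ i, 0 < p i) ∧ ∑ i, p i = 1 ∧
    ∑ i, p i • a i = x ∧ s = ∑ i, Real.log (p i)}

structure IsLogSumMaximizer (a : ι → E) (x : E) (p : ι → ℝ) : Prop where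
  pos : ∀ i, 0 < p i
  sum_eq_one : ∑ i, p i = 1
  sum_smul_eq : ∑ i, p i • a i = x
  sum_log_eq : ∑ i, Real.log (p i) = maxLogSum a x

variable {a : ι → E} {x y : E} {p p' : ι → ℝ}

theorem sum_log_le_maxLogSum {w : ι → ℝ} (hw : ∀ i, 0 < w i) (hw1 : ∑ i, w i = 1)
    (hwx : ∑ i, w i • a i = x) : ∑ i, Real.log (w i) ≤ maxLogSum a x := by
  refine le_csSup ⟨0, ?_⟩ ⟨w, hw, hw1, hwx, rfl⟩
  rintro s ⟨w, hw, hw1, -, rfl⟩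
  refine sum_nonpos fun i _ => Real.log_nonpos (hw i).le ?_
  exact hw1 ▸ single_le_sum (fun j _ => (hw j).le) (mem_univ i)

namespace IsLogSumMaximizer

theorem sum_div_eq_zero (hp : IsLogSumMaximizer a x p) {r : ι → ℝ} (hr : ∑ i, r i = 0)
    (hra : ∑ i, r i • a i = 0) : ∑ i, r i / p i = 0 := by
  obtain ⟨hpos, hsum, hbar, hmax⟩ := hp
  have hderiv : HasDerivAt (fun t : ℝ => ∑ i, Real.log (p i + t * r i)) (∑ i, r i / p i) 0 := by
    refine HasDerivAt.fun_sum fun i _ => ?_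
    simpa using (((hasDerivAt_id (0 : ℝ)).mul_const (r i)).const_add (p i)).log
      (by simpa using (hpos i).ne')
  -- `p + t • r` is admissible for small `t`, so `t = 0` is a local maximum.
  refine hderiv.deriv.symm.trans (IsLocalMax.deriv_eq_zero ?_)
  have hfeas : ∀ᶠ t : ℝ in 𝓝 0, ∀ i, 0 < p i + t * r i := by
    refine eventually_all.2 fun i => ?_
    exact ((continuous_const.add (continuous_id.mul continuous_const)).tendsto' 0 (p i)
      (by simp)).eventually (lt_mem_nhds (hpos i))
  filter_upwards [hfeas] with t ht
  have h1 : ∑ i, (p i + t * r i) = 1 := by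
    rw [sum_add_distrib, hsum, ← mul_sum, hr, mul_zero, add_zero]
  have h2 : ∑ i, (p i + t * r i) • a i = x := by
    simp only [add_smul, sum_add_distrib, hbar, mul_smul, ← smul_sum, hra, smul_zero, add_zero]
  simpa only [zero_mul, add_zero, hmax] using sum_log_le_maxLogSum ht h1 h2

theorem sum_div_congr (hp : IsLogSumMaximizer a x p) {q q' : ι → ℝ}
    (hsum : ∑ i, q i = ∑ i, q' i) (hbar : ∑ i, q i • a i = ∑ i, q' i • a i) :
    ∑ i, q i / p i = ∑ i, q' i / p i := by
  have h := hp.sum_div_eq_zero (r := q - q') (by simp [sum_sub_distrib, hsum])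
    (by simp [sub_smul, sum_sub_distrib, hbar])
  simpa [sub_div, sum_sub_distrib, sub_eq_zero] using h

theorem maxLogSum_le (hp : IsLogSumMaximizer a x p) (hp' : IsLogSumMaximizer a y p') :
    maxLogSum a y ≤ maxLogSum a x + ∑ i, (p' i - p i) / p i := by
  rw [← hp.sum_log_eq, ← hp'.sum_log_eq, ← sub_le_iff_le_add', ← sum_sub_distrib]
  refine sum_le_sum fun i _ => ?_
  have hpi := hp.pos i
  have h := Real.log_le_sub_one_of_pos (div_pos (hp'.pos i) hpi)
  rwa [Real.log_div (hp'.pos i).ne' hpi.ne', div_sub_one hpi.ne'] at h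

end IsLogSumMaximizer

end MaxLogSum

section Gradient

variable {ι E : Type*} [Fintype ι] [NormedAddCommGroup E] [NormedSpace ℝ E]
  {a : ι → E} {x : E}

theorem exists_clm_zero_sum_weights [FiniteDimensional ℝ E]
    (hspan : affineSpan ℝ (Set.range a) = ⊤) :
    ∃ G : E →L[ℝ] (ι → ℝ), ∀ v, ∑ i, G v i = 0 ∧ ∑ i, G v i • a i = v := by
  let T := Fintype.linearCombination ℝ fun i => ((1 : ℝ), a i)
  have hT : ∀ q, T q = (∑ i, q i, ∑ i, q i • a i) := fun q => by
    ext <;> simp [T, Fintype.linearCombination_apply, Prod.fst_sum, Prod.snd_sum]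
  have hweights : ∀ y : E, ∃ w : ι → ℝ, ∑ i, w i = 1 ∧ ∑ i, w i • a i = y := fun y => by
    obtain ⟨w, hw1, hy⟩ := eq_affineCombination_of_mem_affineSpan_of_fintype
      (hspan ▸ AffineSubspace.mem_top ℝ E y)
    exact ⟨w, hw1, by rw [hy, affineCombination_eq_linear_combination _ _ _ hw1]⟩
  have hsurj : LinearMap.range T = ⊤ := by
    refine LinearMap.range_eq_top.2 fun ⟨s, v⟩ => ?_
    obtain ⟨w, hw1, hwv⟩ := hweights v
    obtain ⟨w₀, hw₀1, hw₀⟩ := hweights 0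
    refine ⟨w + (s - 1) • w₀, ?_⟩
    simp [hT, sum_add_distrib, add_smul, ← mul_sum, mul_smul, ← smul_sum, hw1, hwv, hw₀1, hw₀]
  obtain ⟨g, hg⟩ := T.exists_rightInverse_of_surjective hsurj
  refine ⟨(g.comp (LinearMap.inr ℝ ℝ E)).toContinuousLinearMap, fun v => ?_⟩
  have h := hT (g (0, v))
  rw [← LinearMap.comp_apply, hg] at h
  simpa [Prod.ext_iff, eq_comm] using h

noncomputable def logSumGrad (p : ι → ℝ) (G : E →L[ℝ] (ι → ℝ)) : E →L[ℝ] ℝ :=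
  ∑ i, (p i)⁻¹ • (ContinuousLinearMap.proj i).comp G

theorem logSumGrad_apply (p : ι → ℝ) (G : E →L[ℝ] (ι → ℝ)) (v : E) :
    logSumGrad p G v = ∑ i, G v i / p i := by
  simp [logSumGrad, div_eq_inv_mul]

variable {G : E →L[ℝ] (ι → ℝ)}

namespace IsLogSumMaximizer

theorem sum_div_eq_logSumGrad {p : ι → ℝ} (hp : IsLogSumMaximizer a x p)
    (hG : ∀ v, ∑ i, G v i = 0 ∧ ∑ i, G v i • a i = v) {r : ι → ℝ} {v : E}
    (hr : ∑ i, r i = 0) (hra : ∑ i, r i • a i = v) :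
    ∑ i, r i / p i = logSumGrad p G v := by
  rw [logSumGrad_apply, hp.sum_div_congr (q' := G v) (by rw [hr, (hG v).1])
    (by rw [hra, (hG v).2])]

theorem sum_div_eq {p : ι → ℝ} (hp : IsLogSumMaximizer a x p)
    (hG : ∀ v, ∑ i, G v i = 0 ∧ ∑ i, G v i • a i = v) (q : ι → ℝ) :
    ∑ i, q i / p i =
      Fintype.card ι * ∑ i, q i - logSumGrad p G (∑ i, q i • (x - a i)) := by
  set ξ := ∑ i, q i • (x - a i)
  have hξ : ξ = (∑ i, q i) • x - ∑ i, q i • a i := by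
    simp [ξ, smul_sub, sum_sub_distrib, sum_smul]
  rw [hp.sum_div_congr (q' := (∑ i, q i) • p - G ξ)]
  · simp [sub_div, sum_sub_distrib, mul_div_assoc, div_self (hp.pos _).ne', logSumGrad_apply]
  · simp [sum_sub_distrib, ← mul_sum, hp.sum_eq_one, (hG ξ).1]
  · simp only [Pi.sub_apply, Pi.smul_apply, smul_eq_mul, sub_smul, sum_sub_distrib, mul_smul,
      ← smul_sum, hp.sum_smul_eq, (hG ξ).2]
    rw [hξ, sub_sub_cancel]

end IsLogSumMaximizer

theorem hasFDerivAt_maxLogSum (hG : ∀ v, ∑ i, G v i = 0 ∧ ∑ i, G v i • a i = v)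
    {p : E → ι → ℝ} (hp : ∀ᶠ y in 𝓝 x, IsLogSumMaximizer a y (p y)) :
    HasFDerivAt (maxLogSum a) (logSumGrad (p x) G) x := by
  have hpx := hp.self_of_nhds
  have hlin : ∀ i, HasFDerivAt (fun y => p x i + G (y - x) i)
      ((ContinuousLinearMap.proj i).comp G) x := fun i => by
    simpa using ((((ContinuousLinearMap.proj i).comp G).hasFDerivAt.sub_const
      (G x i)).const_add (p x i))
  have hpert : ∀ᶠ y in 𝓝 x, ∀ i, 0 < p x i + G (y - x) i := by
    refine eventually_all.2 fun i => continuousAt_const.eventually_lt (hlin i).continuousAt ?_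
    simpa using hpx.pos i
  refine HasFDerivAt.of_minorant_of_le_tangent
    (g := fun y => ∑ i, Real.log (p x i + G (y - x) i)) ?_ ?_ ?_ ?_
  · have h := HasFDerivAt.fun_sum (u := univ) fun i _ =>
      (hlin i).log (by simpa using (hpx.pos i).ne')
    simpa [logSumGrad] using h
  · simpa using hpx.sum_log_eq
  · filter_upwards [hpert] with y hy
    refine sum_log_le_maxLogSum hy ?_ ?_
    · simp [sum_add_distrib, hpx.sum_eq_one, (hG _).1]
    · simp only [add_smul, sum_add_distrib, hpx.sum_smul_eq, (hG _).2, add_sub_cancel]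
  · filter_upwards [hp] with y hpy
    rw [← hpx.sum_div_eq_logSumGrad hG (r := p y - p x)]
    · exact hpx.maxLogSum_le hpy
    · simp [sum_sub_distrib, hpx.sum_eq_one, hpy.sum_eq_one]
    · simp [sub_smul, sum_sub_distrib, hpx.sum_smul_eq, hpy.sum_smul_eq]

end Gradient

theorem stmt_8_general {d n : ℕ} (a : Fin n → EuclideanSpace ℝ (Fin d))
    (hspan : affineSpan ℝ (Set.range a) = ⊤)
    (P : Set (EuclideanSpace ℝ (Fin d)))
    (p : EuclideanSpace ℝ (Fin d) → Fin n → ℝ)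
    (hp : ∀ x ∈ interior P, (∀ i, 0 < p x i) ∧ ∑ i, p x i = 1 ∧
      ∑ i, p x i • a i = x ∧ ∑ i, Real.log (p x i) = entropyU a x) :
    (∀ x ∈ interior P, DifferentiableAt ℝ (entropyU a) x) ∧
    ∀ x ∈ interior P, ∀ q : Fin n → ℝ, ∀ ξ : EuclideanSpace ℝ (Fin d),
      ξ = ∑ k, q k • (x - a k) →
      ∑ k, q k / p x k = (n : ℝ) * ∑ k, q k - fderiv ℝ (entropyU a) x ξ := by
  obtain ⟨G, hG⟩ := exists_clm_zero_sum_weights hspan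
  have hmax : ∀ x ∈ interior P, IsLogSumMaximizer a x (p x) := fun x hx =>
    let ⟨hpos, hsum, hbar, hlog⟩ := hp x hx; ⟨hpos, hsum, hbar, hlog⟩
  have hderiv : ∀ x ∈ interior P, HasFDerivAt (entropyU a) (logSumGrad (p x) G) x :=
    fun x hx => hasFDerivAt_maxLogSum hG (eventually_of_mem (isOpen_interior.mem_nhds hx) hmax)
  refine ⟨fun x hx => (hderiv x hx).differentiableAt, fun x hx q ξ hξ => ?_⟩
  rw [(hderiv x hx).fderiv, hξ, (hmax x hx).sum_div_eq hG q, Fintype.card_fin]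

/-- `U` is differentiable on the interior, and for any representation
`ξ = ∑ₖ qₖ (x - aₖ)` one has `∑ₖ qₖ/pₖ(x) = n ∑ₖ qₖ - U_{(ξ)}(x)`. -/
theorem stmt_8 {d n : ℕ} (hn : 2 ≤ n) (a : Fin n → EuclideanSpace ℝ (Fin d))
    (ha : Function.Injective a)
    (hspan : affineSpan ℝ (Set.range a) = ⊤)
    (P : Set (EuclideanSpace ℝ (Fin d)))
    (hP : P = convexHull ℝ (Set.range a))
    (hvert : ∀ i, a i ∈ Set.extremePoints ℝ P)
    (hint : (interior P).Nonempty)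
    (p : EuclideanSpace ℝ (Fin d) → Fin n → ℝ)
    (hp : ∀ x ∈ interior P, (∀ i, 0 < p x i) ∧ ∑ i, p x i = 1 ∧
      ∑ i, p x i • a i = x ∧ ∑ i, Real.log (p x i) = entropyU a x) :
    (∀ x ∈ interior P, DifferentiableAt ℝ (entropyU a) x) ∧
    ∀ x ∈ interior P, ∀ q : Fin n → ℝ, ∀ ξ : EuclideanSpace ℝ (Fin d),
      ξ = ∑ k, q k • (x - a k) →
      ∑ k, q k / p x k = (n : ℝ) * ∑ k, q k - fderiv ℝ (entropyU a) x ξ :=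
  stmt_8_general a hspan P p hp
end

section
/- The entropy function $U$ and the entropy-maximizing weights $p_1,\dots,p_n$ are infinitely differentiable (smooth) on the interior $P^o$ of the polytope, assuming the vertices $a_1,\dots,a_n$ affinely span $\mathbb{R}^d$. -/
open Finset
open Filter
open scoped RealInnerProductSpace Topology

section Aux

variable {d n : ℕ}

local notation "E" => EuclideanSpace ℝ (Fin d)


-- Lemma 1: the entropy set is bounded above by 0
lemma entropy_bddAbove (a : Fin n → E) (x : E) :
    BddAbove {s | ∃ p : Fin n → ℝ, (∀ i, 0 < p i) ∧ ∑ i, p i = 1 ∧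
      ∑ i, p i • a i = x ∧ s = ∑ i, Real.log (p i)} := by
  refine ⟨0, ?_⟩
  rintro s ⟨p, hpos, hsum, -, rfl⟩
  refine Finset.sum_nonpos fun i _ => Real.log_nonpos (hpos i).le ?_
  calc p i ≤ ∑ j, p j := Finset.single_le_sum (fun j _ => (hpos j).le) (mem_univ i)
  _ = 1 := hsum

-- derivative of t ↦ ∑ log (p i + t q i) at local max is zero
lemma sum_div_eq_zero (a : Fin n → E) (x : E) (p q : Fin n → ℝ)
    (hpos : ∀ i, 0 < p i) (hsum : ∑ i, p i = 1) (hbary : ∑ i, p i • a i = x)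
    (hopt : ∀ r : Fin n → ℝ, (∀ i, 0 < r i) → ∑ i, r i = 1 → ∑ i, r i • a i = x →
      ∑ i, Real.log (r i) ≤ ∑ i, Real.log (p i))
    (hq1 : ∑ i, q i = 0) (hq2 : ∑ i, q i • a i = 0) :
    ∑ i, q i * (p i)⁻¹ = 0 := by
  rcases Nat.eq_zero_or_pos n with hn | hn
  · subst hn; simp
  have : Nonempty (Fin n) := ⟨⟨0, hn⟩⟩
  have hne : (Finset.univ : Finset (Fin n)).Nonempty := univ_nonempty
  set δ : ℝ := Finset.univ.inf' hne (fun i => p i / (|q i| + 1)) with hδ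
  have hδpos : 0 < δ := by
    rw [hδ, Finset.lt_inf'_iff]
    exact fun i _ => div_pos (hpos i) (by positivity)
  have hkey : ∀ t : ℝ, |t| < δ → ∀ i, 0 < p i + t * q i := by
    intro t ht i
    have h1 : δ ≤ p i / (|q i| + 1) := Finset.inf'_le _ (mem_univ i)
    have h2 : |t * q i| < p i := by
      rw [abs_mul]
      calc |t| * |q i| ≤ |t| * (|q i| + 1) := by nlinarith [abs_nonneg t, abs_nonneg (q i)]
      _ < (p i / (|q i| + 1)) * (|q i| + 1) := by
          apply mul_lt_mul_of_pos_right (lt_of_lt_of_le ht h1) (by positivity)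
      _ = p i := by field_simp
    have := neg_abs_le (t * q i)
    linarith [abs_nonneg (t * q i)]
  set f : ℝ → ℝ := fun t => ∑ i, Real.log (p i + t * q i) with hf
  have hmax : IsLocalMax f 0 := by
    filter_upwards [Metric.ball_mem_nhds (0:ℝ) hδpos] with t ht
    have ht' : |t| < δ := by simpa [Real.dist_eq] using ht
    have : f 0 = ∑ i, Real.log (p i) := by simp [hf]
    rw [this]
    apply hopt
    · exact hkey t ht'
    · rw [Finset.sum_add_distrib]; rw [hsum, ← Finset.mul_sum, hq1]; ring
    · have : ∀ i, (p i + t * q i) • a i = p i • a i + t • (q i • a i) := by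
        intro i; rw [add_smul, smul_smul]
      simp_rw [this]
      rw [Finset.sum_add_distrib, hbary, ← Finset.smul_sum, hq2, smul_zero, add_zero]
  have hder : HasDerivAt f (∑ i, q i / p i) 0 := by
    apply HasDerivAt.fun_sum
    intro i _
    have h1 : HasDerivAt (fun t : ℝ => p i + t * q i) (q i) 0 := by
      simpa using (hasDerivAt_mul_const (q i)).const_add (p i)
    have h2 := h1.log (by simpa using (hpos i).ne')
    simpa using h2
  have := hmax.hasDerivAt_eq_zero hder
  simpa [div_eq_mul_inv, mul_comm] using this


lemma exists_multiplier (a : Fin n → E) (x : E) (p : Fin n → ℝ)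
    (hpos : ∀ i, 0 < p i) (hsum : ∑ i, p i = 1) (hbary : ∑ i, p i • a i = x)
    (hopt : ∀ r : Fin n → ℝ, (∀ i, 0 < r i) → ∑ i, r i = 1 → ∑ i, r i • a i = x →
      ∑ i, Real.log (r i) ≤ ∑ i, Real.log (p i))
    (hderiv : ∀ q : Fin n → ℝ, (∑ i, q i = 0) → (∑ i, q i • a i = 0) →
      ∑ i, q i * (p i)⁻¹ = 0) :
    ∃ l : E, ∀ i, p i = ((n : ℝ) - ⟪x - a i, l⟫)⁻¹ := by
  classical
  -- the linear map (μ, l) ↦ (i ↦ μ + ⟪a i, l⟫)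
  set L : (ℝ × E) →ₗ[ℝ] EuclideanSpace ℝ (Fin n) :=
    { toFun := fun c => WithLp.toLp 2 fun i => c.1 + ⟪a i, c.2⟫
      map_add' := by
        intro c c'; ext i
        simp [inner_add_right]; ring
      map_smul' := by
        intro t c; ext i
        simp [inner_smul_right]; ring } with hL
  set v : EuclideanSpace ℝ (Fin n) := WithLp.toLp 2 fun i => (p i)⁻¹ with hv
  have hvmem : v ∈ (LinearMap.range L)ᗮᗮ := by
    rw [Submodule.mem_orthogonal]
    rintro q hq
    rw [Submodule.mem_orthogonal] at hq
    have hq1 : ∑ i, q i = 0 := by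
      have := hq (L (1, 0)) ⟨(1, 0), rfl⟩
      simpa [hL, PiLp.inner_apply, RCLike.inner_apply] using this
    have hq2 : ∑ i, q i • a i = 0 := by
      set w : E := ∑ i, q i • a i with hw
      have h0 : ⟪w, w⟫ = 0 := by
        have := hq (L (0, w)) ⟨(0, w), rfl⟩
        have h2 : ∑ i, (⟪a i, w⟫) * q i = 0 := by
          simpa [hL, PiLp.inner_apply, RCLike.inner_apply, mul_comm] using this
        calc ⟪w, w⟫ = ∑ i, q i * ⟪a i, w⟫ := by
              rw [hw, sum_inner]
              congr 1; funext i; rw [real_inner_smul_left]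
        _ = 0 := by rw [← h2]; congr 1; funext i; ring
      exact inner_self_eq_zero.mp h0
    have : ∑ i, q i * (p i)⁻¹ = 0 := hderiv q hq1 hq2
    simpa [hv, PiLp.inner_apply, RCLike.inner_apply, mul_comm] using this
  rw [Submodule.orthogonal_orthogonal] at hvmem
  obtain ⟨⟨μ, l⟩, hml⟩ := hvmem
  have hml' : ∀ i, μ + ⟪a i, l⟫ = (p i)⁻¹ := fun i => congrArg (fun w : EuclideanSpace ℝ (Fin n) => w i) hml
  have hmu : μ = (n : ℝ) - ⟪x, l⟫ := by
    have h1 : ∑ i, p i * (μ + ⟪a i, l⟫) = (n : ℝ) := by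
      have : ∀ i, p i * (μ + ⟪a i, l⟫) = 1 := by
        intro i; rw [hml' i]; exact mul_inv_cancel₀ (hpos i).ne'
      rw [Finset.sum_congr rfl fun i _ => this i]; simp
    have h2 : ∑ i, p i * (μ + ⟪a i, l⟫) = μ + ⟪x, l⟫ := by
      have : ∀ i, p i * (μ + ⟪a i, l⟫) = p i * μ + ⟪p i • a i, l⟫ := by
        intro i; rw [real_inner_smul_left]; ring
      rw [Finset.sum_congr rfl (fun i _ => this i), Finset.sum_add_distrib,
        ← Finset.sum_mul, hsum, ← sum_inner, hbary, one_mul]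
    rw [h1] at h2
    linarith
  refine ⟨l, fun i => ?_⟩
  have : (p i)⁻¹ = (n : ℝ) - ⟪x - a i, l⟫ := by
    rw [← hml' i, hmu, inner_sub_left]; ring
  rw [← this, inv_inv]


lemma maximizer_eq (hn : 1 ≤ n) (a : Fin n → E) (x : E) (p : Fin n → ℝ) (l : E)
    (hpos : ∀ i, 0 < p i) (hsum : ∑ i, p i = 1) (hbary : ∑ i, p i • a i = x)
    (hopt : ∀ r : Fin n → ℝ, (∀ i, 0 < r i) → ∑ i, r i = 1 → ∑ i, r i • a i = x →
      ∑ i, Real.log (r i) ≤ ∑ i, Real.log (p i))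
    (hden : ∀ i, 0 < (n : ℝ) - ⟪x - a i, l⟫)
    (hF : ∑ i, ((n : ℝ) - ⟪x - a i, l⟫)⁻¹ • (x - a i) = 0) :
    ∀ i, p i = ((n : ℝ) - ⟪x - a i, l⟫)⁻¹ := by
  classical
  set c : Fin n → ℝ := fun i => (n : ℝ) - ⟪x - a i, l⟫ with hc
  set q : Fin n → ℝ := fun i => (c i)⁻¹ with hq
  have hqpos : ∀ i, 0 < q i := fun i => inv_pos.mpr (hden i)
  -- ∑ q i = 1
  have hFinner : ∑ i, q i * ⟪x - a i, l⟫ = 0 := by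
    have h1 : ∑ i, q i * ⟪x - a i, l⟫ = ⟪∑ i, q i • (x - a i), l⟫ := by
      rw [sum_inner]
      exact Finset.sum_congr rfl fun i _ => (real_inner_smul_left _ _ _).symm
    rw [h1, hF, inner_zero_left]
  have hq_sum : ∑ i, q i = 1 := by
    have h1 : ∑ i, q i * c i = (n : ℝ) := by
      have : ∀ i, q i * c i = 1 := fun i => inv_mul_cancel₀ (hden i).ne'
      rw [Finset.sum_congr rfl fun i _ => this i]; simp
    have h2 : ∑ i, q i * c i = (n : ℝ) * ∑ i, q i - ∑ i, q i * ⟪x - a i, l⟫ := by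
      rw [Finset.mul_sum, ← Finset.sum_sub_distrib]
      exact Finset.sum_congr rfl fun i _ => by rw [hc]; ring
    rw [h1, hFinner, sub_zero] at h2
    have hn' : (n : ℝ) ≠ 0 := Nat.cast_ne_zero.mpr (by omega)
    field_simp at h2
    linarith [h2]
  -- ∑ q i • a i = x
  have hq_bary : ∑ i, q i • a i = x := by
    have hsplit : ∑ i, q i • (x - a i) = (∑ i, q i) • x - ∑ i, q i • a i := by
      rw [Finset.sum_smul, ← Finset.sum_sub_distrib]
      exact Finset.sum_congr rfl fun i _ => smul_sub _ _ _
    rw [hF, hq_sum, one_smul] at hsplit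
    exact (sub_eq_zero.mp hsplit.symm).symm
  -- ∑ p i * c i = n
  have hp_key : ∑ i, p i * c i = (n : ℝ) := by
    have h2 : ∑ i, p i * c i = (n : ℝ) * ∑ i, p i - ∑ i, p i * ⟪x - a i, l⟫ := by
      rw [Finset.mul_sum, ← Finset.sum_sub_distrib]
      exact Finset.sum_congr rfl fun i _ => by rw [hc]; ring
    have h3 : ∑ i, p i * ⟪x - a i, l⟫ = 0 := by
      have hps : ∑ i, p i • (x - a i) = (∑ i, p i) • x - ∑ i, p i • a i := by
        rw [Finset.sum_smul, ← Finset.sum_sub_distrib]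
        exact Finset.sum_congr rfl fun i _ => smul_sub _ _ _
      rw [hsum, one_smul, hbary, sub_self] at hps
      have h4 : ∑ i, p i * ⟪x - a i, l⟫ = ⟪∑ i, p i • (x - a i), l⟫ := by
        rw [sum_inner]
        exact Finset.sum_congr rfl fun i _ => (real_inner_smul_left _ _ _).symm
      rw [h4, hps, inner_zero_left]
    rw [h2, h3, hsum, mul_one, sub_zero]
  -- the log inequality terms
  have hterm : ∀ i ∈ Finset.univ, Real.log (p i) - Real.log (q i) - (p i * c i - 1) ≤ 0 := by
    intro i _
    have hpc : 0 < p i * c i := mul_pos (hpos i) (hden i)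
    have hlog : Real.log (p i * c i) ≤ p i * c i - 1 := Real.log_le_sub_one_of_pos hpc
    have : Real.log (p i) - Real.log (q i) = Real.log (p i * c i) := by
      rw [Real.log_mul (hpos i).ne' (hden i).ne', hq, Real.log_inv]
      ring
    linarith
  have hsum_terms : ∑ i, (Real.log (p i) - Real.log (q i) - (p i * c i - 1)) = 
      (∑ i, Real.log (p i) - ∑ i, Real.log (q i)) - (∑ i, p i * c i - n) := by
    rw [Finset.sum_sub_distrib, Finset.sum_sub_distrib, Finset.sum_sub_distrib]
    simp
  have hge : 0 ≤ ∑ i, (Real.log (p i) - Real.log (q i) - (p i * c i - 1)) := by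
    rw [hsum_terms, hp_key, sub_self, sub_zero, sub_nonneg]
    exact hopt q hqpos hq_sum hq_bary
  have hall : ∀ i ∈ Finset.univ, Real.log (p i) - Real.log (q i) - (p i * c i - 1) = 0 := by
    have hle := Finset.sum_nonpos hterm
    have h0 : ∑ i, (Real.log (p i) - Real.log (q i) - (p i * c i - 1)) = 0 := le_antisymm hle hge
    intro i hi
    by_contra hne
    have hlt : Real.log (p i) - Real.log (q i) - (p i * c i - 1) < 0 :=
      lt_of_le_of_ne (hterm i hi) hne
    have hlt2 : ∑ j, (Real.log (p j) - Real.log (q j) - (p j * c j - 1)) <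
        ∑ _j : Fin n, (0 : ℝ) :=
      Finset.sum_lt_sum hterm ⟨i, hi, hlt⟩
    simp only [Finset.sum_const_zero] at hlt2
    linarith
  intro i
  have h := hall i (mem_univ i)
  have hpc : 0 < p i * c i := mul_pos (hpos i) (hden i)
  have hlogeq : Real.log (p i * c i) = p i * c i - 1 := by
    have : Real.log (p i) - Real.log (q i) = Real.log (p i * c i) := by
      rw [Real.log_mul (hpos i).ne' (hden i).ne', hq, Real.log_inv]; ring
    linarith
  have hpc1 : p i * c i = 1 := by
    by_contra hne
    exact absurd hlogeq (ne_of_lt (Real.log_lt_sub_one_of_pos hpc hne))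
  have hcne : (n : ℝ) - ⟪x - a i, l⟫ ≠ 0 := (hden i).ne'
  show p i = (c i)⁻¹
  exact eq_inv_of_mul_eq_one_left hpc1


lemma exists_smooth_lambda (a : Fin n → E) (x₀ : E) (l₀ : E)
    (hsp : Submodule.span ℝ (Set.range fun i => x₀ - a i) = ⊤)
    (hden : ∀ i, 0 < (n : ℝ) - ⟪x₀ - a i, l₀⟫)
    (hF : ∑ i, ((n : ℝ) - ⟪x₀ - a i, l₀⟫)⁻¹ • (x₀ - a i) = 0) :
    ∃ Λ : E → E, ContDiffAt ℝ (⊤ : ℕ∞) Λ x₀ ∧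
      ∀ᶠ x in 𝓝 x₀, (∀ i, 0 < (n : ℝ) - ⟪x - a i, Λ x⟫) ∧
        ∑ i, ((n : ℝ) - ⟪x - a i, Λ x⟫)⁻¹ • (x - a i) = 0 := by
  classical
  set z₀ : E × E := (l₀, x₀) with hz₀
  set Φ : E × E → E × E :=
    fun z => (∑ i, ((n : ℝ) - ⟪z.2 - a i, z.1⟫)⁻¹ • (z.2 - a i), z.2) with hΦdef
  -- smoothness of Φ at z₀
  have hΦ : ContDiffAt ℝ (⊤ : ℕ∞) Φ z₀ := by
    refine ContDiffAt.prodMk (ContDiffAt.sum fun i _ => ?_) contDiffAt_snd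
    have h1 : ContDiffAt ℝ (⊤ : ℕ∞) (fun z : E × E => (n : ℝ) - ⟪z.2 - a i, z.1⟫) z₀ :=
      contDiffAt_const.sub
        (ContDiffAt.inner ℝ (contDiffAt_snd.sub contDiffAt_const) contDiffAt_fst)
    exact (h1.inv (hden i).ne').smul (contDiffAt_snd.sub contDiffAt_const)
  -- the partial derivative in the λ-direction
  set A : E →L[ℝ] E := ∑ i : Fin n,
    (((-(((n : ℝ) - ⟪x₀ - a i, l₀⟫) ^ 2)⁻¹) •
      ((0 : E →L[ℝ] ℝ) - (innerSL ℝ (x₀ - a i))))).smulRight (x₀ - a i) with hAdef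
  have hA : HasFDerivAt (fun l : E => ∑ i, ((n : ℝ) - ⟪x₀ - a i, l⟫)⁻¹ • (x₀ - a i)) A l₀ := by
    rw [hAdef]
    apply HasFDerivAt.fun_sum
    intro i _
    have hc : HasFDerivAt (fun l : E => (n : ℝ) - ⟪x₀ - a i, l⟫)
        ((0 : E →L[ℝ] ℝ) - innerSL ℝ (x₀ - a i)) l₀ := by
      exact (hasFDerivAt_const (n : ℝ) l₀).sub (innerSL ℝ (x₀ - a i)).hasFDerivAt
    have hinv := (hasDerivAt_inv (hden i).ne').comp_hasFDerivAt l₀ hc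
    exact hinv.smul_const (x₀ - a i)
  -- full derivative of Φ at z₀
  have hΦdiff : DifferentiableAt ℝ Φ z₀ := hΦ.differentiableAt (by simp)
  set D : (E × E) →L[ℝ] (E × E) := fderiv ℝ Φ z₀ with hDdef
  have hΦ' : HasFDerivAt Φ D z₀ := hΦdiff.hasFDerivAt
  -- second component of D
  have hsnd : ∀ w : E × E, (D w).2 = w.2 := by
    have h2 : HasFDerivAt (fun z : E × E => (Φ z).2)
        ((ContinuousLinearMap.snd ℝ E E).comp D) z₀ :=
      (hasFDerivAt_snd).comp z₀ hΦ'
    have h3 : (fun z : E × E => (Φ z).2) = (Prod.snd : E × E → E) := rfl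
    rw [h3] at h2
    have h4 : (ContinuousLinearMap.snd ℝ E E).comp D = ContinuousLinearMap.snd ℝ E E :=
      h2.unique hasFDerivAt_snd
    intro w
    exact congrArg (fun f => f w) (congrArg DFunLike.coe h4)
  -- first component of D on (h, 0)
  have hfst : ∀ h : E, D (h, 0) = (A h, 0) := by
    have hinc : HasFDerivAt (fun l : E => ((l, x₀) : E × E))
        ((ContinuousLinearMap.id ℝ E).prod 0) l₀ :=
      (hasFDerivAt_id l₀).prodMk (hasFDerivAt_const x₀ l₀)
    have hcomp : HasFDerivAt (fun l : E => Φ (l, x₀))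
        (D.comp ((ContinuousLinearMap.id ℝ E).prod 0)) l₀ := hΦ'.comp l₀ hinc
    have hcomp2 : HasFDerivAt (fun l : E => Φ (l, x₀)) (A.prod 0) l₀ :=
      hA.prodMk (hasFDerivAt_const x₀ l₀)
    have h5 := hcomp.unique hcomp2
    intro h
    have := congrArg (fun f => f h) (congrArg DFunLike.coe h5)
    simpa using this
  -- A is injective
  have hAinj : ∀ h : E, A h = 0 → h = 0 := by
    intro h hh
    have hip : ∀ i, ⟪x₀ - a i, h⟫ = 0 := by
      have h0 : ⟪A h, h⟫ = 0 := by rw [hh, inner_zero_left]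
      have hAh : ⟪A h, h⟫ = ∑ i, (((n : ℝ) - ⟪x₀ - a i, l₀⟫) ^ 2)⁻¹ * ⟪x₀ - a i, h⟫ ^ 2 := by
        rw [hAdef, ContinuousLinearMap.sum_apply, sum_inner]
        refine Finset.sum_congr rfl fun i _ => ?_
        rw [ContinuousLinearMap.smulRight_apply, real_inner_smul_left]
        simp only [ContinuousLinearMap.smul_apply, ContinuousLinearMap.sub_apply,
          ContinuousLinearMap.zero_apply, innerSL_apply_apply, smul_eq_mul]
        ring
      rw [hAh] at h0
      intro i
      have hterm : ∀ j ∈ Finset.univ,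
          (0:ℝ) ≤ (((n : ℝ) - ⟪x₀ - a j, l₀⟫) ^ 2)⁻¹ * ⟪x₀ - a j, h⟫ ^ 2 := by
        intro j _; positivity
      have := (Finset.sum_eq_zero_iff_of_nonneg hterm).mp h0 i (mem_univ i)
      have hpos : (0:ℝ) < (((n : ℝ) - ⟪x₀ - a i, l₀⟫) ^ 2)⁻¹ := by
        have := hden i; positivity
      have := mul_eq_zero.mp this
      rcases this with h' | h'
      · exact absurd h' hpos.ne'
      · exact pow_eq_zero_iff (by norm_num) |>.mp h'
    have hmem : h ∈ (Submodule.span ℝ (Set.range fun i => x₀ - a i)) := by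
      rw [hsp]; exact Submodule.mem_top
    have hally : ∀ w ∈ Submodule.span ℝ (Set.range fun i => x₀ - a i), ⟪w, h⟫ = (0:ℝ) := by
      intro w hw
      induction hw using Submodule.span_induction with
      | mem w hw => obtain ⟨i, rfl⟩ := hw; exact hip i
      | zero => exact inner_zero_left h
      | add u v _ _ h1 h2 => rw [inner_add_left, h1, h2, add_zero]
      | smul c u _ h1 => rw [real_inner_smul_left, h1, mul_zero]
    exact inner_self_eq_zero.mp (hally h hmem)
  -- D is injective
  have hDinj : Function.Injective D := by
    rw [← ContinuousLinearMap.coe_coe D]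
    rw [← LinearMap.ker_eq_bot]
    rw [LinearMap.ker_eq_bot']
    intro w hw
    have hw' : D w = 0 := hw
    have hk : w.2 = 0 := by rw [← hsnd w, hw']; rfl
    have hw2 : w = (w.1, (0 : E)) := by rw [← hk]
    rw [hw2] at hw'
    rw [hfst w.1] at hw'
    have : A w.1 = 0 := congrArg Prod.fst hw'
    have h1 : w.1 = 0 := hAinj w.1 this
    rw [hw2, h1]; rfl
  -- upgrade D to a continuous linear equivalence
  set Deq : (E × E) ≃L[ℝ] (E × E) :=
    LinearEquiv.toContinuousLinearEquiv
      (LinearMap.linearEquivOfInjective (D : (E × E) →ₗ[ℝ] (E × E)) hDinj rfl) with hDeq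
  have hDeqD : (Deq : (E × E) →L[ℝ] (E × E)) = D := by
    apply ContinuousLinearMap.ext
    intro w
    rfl
  have hΦD : HasFDerivAt Φ ((Deq : (E × E) ≃L[ℝ] (E × E)) : (E × E) →L[ℝ] (E × E)) z₀ := by
    rw [hDeqD]; exact hΦ'
  -- the local inverse
  set Ψ : E × E → E × E := hΦ.localInverse hΦD (by simp) with hΨdef
  have hΨsmooth : ContDiffAt ℝ (⊤ : ℕ∞) Ψ (Φ z₀) := hΦ.to_localInverse hΦD (by simp)
  have hΨz : Ψ (Φ z₀) = z₀ := hΦ.localInverse_apply_image hΦD (by simp)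
  have hrinv : ∀ᶠ y in 𝓝 (Φ z₀), Φ (Ψ y) = y :=
    (hΦ.hasStrictFDerivAt' hΦD (by simp)).eventually_right_inverse
  have hΦz₀ : Φ z₀ = ((0 : E), x₀) := by
    rw [hΦdef]
    exact Prod.ext hF rfl
  -- define Λ
  refine ⟨fun x => (Ψ ((0 : E), x)).1, ?_, ?_⟩
  · have h1 : ContDiffAt ℝ (⊤ : ℕ∞) (fun x : E => (((0 : E), x) : E × E)) x₀ :=
      contDiffAt_const.prodMk contDiffAt_id
    have h2 : ContDiffAt ℝ (⊤ : ℕ∞) Ψ (((0 : E), x₀) : E × E) := hΦz₀ ▸ hΨsmooth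
    exact (contDiffAt_fst (p := Ψ ((0 : E), x₀))).comp x₀ (h2.comp x₀ h1)
  · -- eventually properties
    have hΛx₀ : (Ψ ((0 : E), x₀)).1 = l₀ := by
      rw [← hΦz₀, hΨz]
    have htend : Tendsto (fun x : E => (((0 : E), x) : E × E)) (𝓝 x₀) (𝓝 (Φ z₀)) := by
      rw [hΦz₀]
      exact (continuous_const.prodMk continuous_id).tendsto x₀
    have hev1 : ∀ᶠ x in 𝓝 x₀, Φ (Ψ ((0 : E), x)) = ((0 : E), x) := htend.eventually hrinv
    have hΛcont : ContinuousAt (fun x : E => (Ψ ((0 : E), x)).1) x₀ := by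
      have h2 : ContDiffAt ℝ (⊤ : ℕ∞) Ψ (((0 : E), x₀) : E × E) := hΦz₀ ▸ hΨsmooth
      exact ((contDiffAt_fst (p := Ψ ((0 : E), x₀))).comp x₀
        (h2.comp x₀ (contDiffAt_const.prodMk contDiffAt_id))).continuousAt
    have hposev : ∀ i, ∀ᶠ x in 𝓝 x₀, 0 < (n : ℝ) - ⟪x - a i, (Ψ ((0 : E), x)).1⟫ := by
      intro i
      have hcont : ContinuousAt (fun x : E => (n : ℝ) - ⟪x - a i, (Ψ ((0 : E), x)).1⟫) x₀ :=
        continuousAt_const.sub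
          (ContinuousAt.inner (continuousAt_id.sub continuousAt_const) hΛcont)
      have hval : (n : ℝ) - ⟪x₀ - a i, (Ψ ((0 : E), x₀)).1⟫ = (n : ℝ) - ⟪x₀ - a i, l₀⟫ := by
        rw [hΛx₀]
      have : Tendsto (fun x : E => (n : ℝ) - ⟪x - a i, (Ψ ((0 : E), x)).1⟫) (𝓝 x₀)
          (𝓝 ((n : ℝ) - ⟪x₀ - a i, l₀⟫)) := hval ▸ hcont.tendsto
      exact this.eventually (eventually_gt_nhds (hden i))
    filter_upwards [hev1, eventually_all.mpr hposev] with x hx hpos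
    refine ⟨hpos, ?_⟩
    have hsndx : (Ψ ((0 : E), x)).2 = x := congrArg Prod.snd hx
    have hfstx : (∑ i, ((n : ℝ) - ⟪(Ψ ((0 : E), x)).2 - a i, (Ψ ((0 : E), x)).1⟫)⁻¹ •
        ((Ψ ((0 : E), x)).2 - a i)) = 0 := congrArg Prod.fst hx
    rw [hsndx] at hfstx
    exact hfstx

end Aux

/-- The entropy function `U` and the entropy-maximizing weights `pₖ` are infinitely
differentiable on the interior of the polytope, provided the vertices affinely span. -/
theorem stmt_11 {d n : ℕ} (hn : 2 ≤ n) (a : Fin n → EuclideanSpace ℝ (Fin d))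
    (ha : Function.Injective a)
    (hspan : affineSpan ℝ (Set.range a) = ⊤)
    (P : Set (EuclideanSpace ℝ (Fin d)))
    (hP : P = convexHull ℝ (Set.range a))
    (hvert : ∀ i, a i ∈ Set.extremePoints ℝ P)
    (hint : (interior P).Nonempty)
    (p : EuclideanSpace ℝ (Fin d) → Fin n → ℝ)
    (hp : ∀ x ∈ interior P, (∀ i, 0 < p x i) ∧ ∑ i, p x i = 1 ∧
      ∑ i, p x i • a i = x ∧ ∑ i, Real.log (p x i) = entropyU a x) :
    ContDiffOn ℝ (⊤ : ℕ∞) (entropyU a) (interior P) ∧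
    ∀ k, ContDiffOn ℝ (⊤ : ℕ∞) (fun x => p x k) (interior P) := by
  classical
  -- optimality of p x
  have hoptAt : ∀ x ∈ interior P, ∀ r : Fin n → ℝ, (∀ i, 0 < r i) → ∑ i, r i = 1 →
      ∑ i, r i • a i = x → ∑ i, Real.log (r i) ≤ ∑ i, Real.log (p x i) := by
    intro x hx r h1 h2 h3
    have hle : ∑ i, Real.log (r i) ≤ entropyU a x :=
      le_csSup (entropy_bddAbove a x) ⟨r, h1, h2, h3, rfl⟩
    rw [(hp x hx).2.2.2]
    exact hle
  -- span of differences
  have hvs : vectorSpan ℝ (Set.range a) = ⊤ := by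
    rw [← direction_affineSpan, hspan]
    exact AffineSubspace.direction_top ℝ _ _
  have hsp : ∀ x₀ : EuclideanSpace ℝ (Fin d), Submodule.span ℝ (Set.range fun i => x₀ - a i) = ⊤ := by
    intro x₀
    apply top_unique
    rw [← hvs, vectorSpan_def]
    apply Submodule.span_le.mpr
    rintro w ⟨y, ⟨i, rfl⟩, z, ⟨j, rfl⟩, rfl⟩
    show a i - a j ∈ _
    have heq : a i - a j = (x₀ - a j) - (x₀ - a i) := by abel
    rw [heq]
    exact sub_mem (Submodule.subset_span ⟨j, rfl⟩) (Submodule.subset_span ⟨i, rfl⟩)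
  -- barycentric difference identity
  have hFzero : ∀ x : EuclideanSpace ℝ (Fin d), ∀ r : Fin n → ℝ, ∑ i, r i = 1 → ∑ i, r i • a i = x →
      ∑ i, r i • (x - a i) = 0 := by
    intro x r h1 h2
    have hsplit : ∑ i, r i • (x - a i) = (∑ i, r i) • x - ∑ i, r i • a i := by
      rw [Finset.sum_smul, ← Finset.sum_sub_distrib]
      exact Finset.sum_congr rfl fun i _ => smul_sub _ _ _
    rw [hsplit, h1, h2, one_smul, sub_self]
  -- the key local statement
  have key : ∀ x₀ ∈ interior P, ∃ Λ : EuclideanSpace ℝ (Fin d) → EuclideanSpace ℝ (Fin d), ContDiffAt ℝ (⊤ : ℕ∞) Λ x₀ ∧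
      (∀ i, 0 < (n : ℝ) - ⟪x₀ - a i, Λ x₀⟫) ∧
      ∀ᶠ x in 𝓝 x₀, (∀ i, 0 < (n : ℝ) - ⟪x - a i, Λ x⟫) ∧
        ∀ i, p x i = ((n : ℝ) - ⟪x - a i, Λ x⟫)⁻¹ := by
    intro x₀ hx₀
    obtain ⟨hpos, hsum, hbary, hU⟩ := hp x₀ hx₀
    obtain ⟨l₀, hl₀⟩ := exists_multiplier a x₀ (p x₀) hpos hsum hbary (hoptAt x₀ hx₀)
      (fun q hq1 hq2 => sum_div_eq_zero a x₀ (p x₀) q hpos hsum hbary (hoptAt x₀ hx₀) hq1 hq2)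
    have hden : ∀ i, 0 < (n : ℝ) - ⟪x₀ - a i, l₀⟫ := by
      intro i
      have := hpos i
      rw [hl₀ i] at this
      exact inv_pos.mp this
    have hF₀ : ∑ i, ((n : ℝ) - ⟪x₀ - a i, l₀⟫)⁻¹ • (x₀ - a i) = 0 := by
      have := hFzero x₀ (p x₀) hsum hbary
      rw [← this]
      exact Finset.sum_congr rfl fun i _ => by rw [← hl₀ i]
    obtain ⟨Λ, hΛsmooth, hΛev⟩ := exists_smooth_lambda a x₀ l₀ (hsp x₀) hden hF₀
    refine ⟨Λ, hΛsmooth, ?_, ?_⟩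
    · exact hΛev.self_of_nhds.1
    · filter_upwards [hΛev, isOpen_interior.mem_nhds hx₀] with x hx hxP
      obtain ⟨hposx, hsumx, hbaryx, _⟩ := hp x hxP
      exact ⟨hx.1, maximizer_eq (by omega) a x (p x) (Λ x) hposx hsumx hbaryx
        (hoptAt x hxP) hx.1 hx.2⟩
  constructor
  · intro x₀ hx₀
    obtain ⟨Λ, hΛsmooth, hden₀, hev⟩ := key x₀ hx₀
    apply ContDiffAt.contDiffWithinAt
    have hsm : ContDiffAt ℝ (⊤ : ℕ∞) (fun x => ∑ i, Real.log (((n : ℝ) - ⟪x - a i, Λ x⟫)⁻¹)) x₀ := by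
      apply ContDiffAt.sum
      intro i _
      have h1 : ContDiffAt ℝ (⊤ : ℕ∞) (fun x : EuclideanSpace ℝ (Fin d) => ((n : ℝ) - ⟪x - a i, Λ x⟫)⁻¹) x₀ :=
        (contDiffAt_const.sub
          (ContDiffAt.inner ℝ (contDiffAt_id.sub contDiffAt_const) hΛsmooth)).inv
          (hden₀ i).ne'
      exact h1.log (inv_ne_zero (hden₀ i).ne')
    apply hsm.congr_of_eventuallyEq
    filter_upwards [hev, isOpen_interior.mem_nhds hx₀] with x hx hxP
    rw [← (hp x hxP).2.2.2]
    exact Finset.sum_congr rfl fun i _ => by rw [hx.2 i]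
  · intro k x₀ hx₀
    obtain ⟨Λ, hΛsmooth, hden₀, hev⟩ := key x₀ hx₀
    apply ContDiffAt.contDiffWithinAt
    have h1 : ContDiffAt ℝ (⊤ : ℕ∞) (fun x : EuclideanSpace ℝ (Fin d) => ((n : ℝ) - ⟪x - a k, Λ x⟫)⁻¹) x₀ :=
      (contDiffAt_const.sub
        (ContDiffAt.inner ℝ (contDiffAt_id.sub contDiffAt_const) hΛsmooth)).inv
        (hden₀ k).ne'
    apply h1.congr_of_eventuallyEq
    filter_upwards [hev] with x hx
    exact hx.2 k
end

section
/- For the entropy function $U$ and weights $p_k$ on the interior of a polytope with vertices $a_1,\dots,a_n$, for every interior point $x$ and every direction $\xi \in \mathbb{R}^d$, the second directional derivative satisfies $U_{(\xi)(\xi)}(x) = -\sum_{k=1}^n (p_{k(\xi)}(x))^2 / p_k(x)^2$, where $p_{k(\xi)} = (\xi, \nabla p_k)$. -/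
/-!
At an interior point `x` the maximizing weights satisfy the Lagrange condition
`1 / p k = ⟪b k, z⟫` with `b k = (1, a k)` and a dual point `z ∈ ℝ × ℝᵈ`; conversely, by strict
concavity of `log`, any positive weights of this form are the unique maximizer. The map
`z ↦ ∑ k, ⟪b k, z⟫⁻¹ • b k` has the negative definite derivative
`δ ↦ -∑ k, ⟪b k, δ⟫ / ⟪b k, z⟫ ^ 2 • b k`, so by the inverse function theorem the dual point
`z(x)` depends differentiably on `x`, and near `x` we have `p k = 1 / ⟪b k, z⟫`,
`U = ∑ k, log (p k)`. Differentiating `∑ k, p k • b k = (1, x)` gives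
`∑ k, p_{k(ξ)} • b k = (0, ξ)`, hence `U_(ξ) = ⟪(0, ξ), z⟫` and
`U_(ξ)(ξ) = ⟪(0, ξ), z_(ξ)⟫ = ∑ k, p_{k(ξ)} ⟪b k, z_(ξ)⟫ = -∑ k, p_{k(ξ)} ^ 2 / p k ^ 2`.
-/

open Finset

open Real Filter Topology RealInnerProductSpace

lemma Real.log_sub_log_le_div {r q : ℝ} (hr : 0 < r) (hq : 0 < q) :
    log r - log q ≤ (r - q) / q := by
  rw [← log_div hr.ne' hq.ne', sub_div, div_self hq.ne']
  exact log_le_sub_one_of_pos (div_pos hr hq)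

lemma Real.log_sub_log_lt_div {r q : ℝ} (hr : 0 < r) (hq : 0 < q) (hrq : r ≠ q) :
    log r - log q < (r - q) / q := by
  rw [← log_div hr.ne' hq.ne', sub_div, div_self hq.ne']
  exact log_lt_sub_one_of_pos (div_pos hr hq) (by rwa [ne_eq, div_eq_one_iff_eq hq.ne'])

section Barrier

variable {ι F : Type*} [NormedAddCommGroup F] [InnerProductSpace ℝ F] {b : ι → F}

noncomputable def dualWeight (b : ι → F) (z : F) (i : ι) : ℝ := (⟪b i, z⟫)⁻¹

lemma hasFDerivAt_dualWeight_comp {E : Type*} [NormedAddCommGroup E] [NormedSpace ℝ E]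
    {Z : E → F} {Z' : E →L[ℝ] F} {y : E} (hZ : HasFDerivAt Z Z' y) {i : ι}
    (hz : ⟪b i, Z y⟫ ≠ 0) :
    HasFDerivAt (fun y => dualWeight b (Z y) i)
      (-(⟪b i, Z y⟫ ^ 2)⁻¹ • (innerSL ℝ (b i)).comp Z') y :=
  (hasDerivAt_inv hz).comp_hasFDerivAt y ((innerSL ℝ (b i)).hasFDerivAt.comp y hZ)

variable [Fintype ι]

/-- The gradient of `z ↦ ∑ i, log ⟪b i, z⟫`. -/
noncomputable def momentMap (b : ι → F) (z : F) : F := ∑ i, dualWeight b z i • b i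

lemma sum_sub_div_dualWeight_eq_zero {z : F} {r : ι → ℝ}
    (h : ∑ i, r i • b i = momentMap b z) :
    ∑ i, (r i - dualWeight b z i) / dualWeight b z i = 0 := by
  have hdiff : ∑ i, (r i - dualWeight b z i) • b i = 0 := by
    simp only [sub_smul, sum_sub_distrib, h, momentMap, sub_self]
  calc ∑ i, (r i - dualWeight b z i) / dualWeight b z i
      = ⟪∑ i, (r i - dualWeight b z i) • b i, z⟫ := by
        simp only [sum_inner, real_inner_smul_left, dualWeight, div_inv_eq_mul]
    _ = 0 := by rw [hdiff, inner_zero_left]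

lemma sum_log_le_sum_log_dualWeight {z : F} (hz : ∀ i, 0 < ⟪b i, z⟫) {r : ι → ℝ}
    (hr : ∀ i, 0 < r i) (h : ∑ i, r i • b i = momentMap b z) :
    ∑ i, log (r i) ≤ ∑ i, log (dualWeight b z i) := by
  have hq i : 0 < dualWeight b z i := inv_pos.mpr (hz i)
  have := sum_le_sum fun i (_ : i ∈ univ) => log_sub_log_le_div (hr i) (hq i)
  rw [sum_sub_div_dualWeight_eq_zero h, sum_sub_distrib] at this
  linarith

lemma eq_dualWeight_of_sum_log_eq {z : F} (hz : ∀ i, 0 < ⟪b i, z⟫) {r : ι → ℝ}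
    (hr : ∀ i, 0 < r i) (h : ∑ i, r i • b i = momentMap b z)
    (heq : ∑ i, log (r i) = ∑ i, log (dualWeight b z i)) : r = dualWeight b z := by
  by_contra hne
  obtain ⟨j, hj⟩ := Function.ne_iff.mp hne
  have hq i : 0 < dualWeight b z i := inv_pos.mpr (hz i)
  have := sum_lt_sum (fun i (_ : i ∈ univ) => log_sub_log_le_div (hr i) (hq i))
    ⟨j, mem_univ j, log_sub_log_lt_div (hr j) (hq j) hj⟩
  rw [sum_sub_div_dualWeight_eq_zero h, sum_sub_distrib] at this
  linarith

lemma sum_mul_inv_eq_zero_of_isMax {p : ι → ℝ} (hp : ∀ i, 0 < p i)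
    (hmax : ∀ r : ι → ℝ, (∀ i, 0 < r i) → ∑ i, r i • b i = ∑ i, p i • b i →
      ∑ i, log (r i) ≤ ∑ i, log (p i))
    {v : ι → ℝ} (hv : ∑ i, v i • b i = 0) : ∑ i, v i * (p i)⁻¹ = 0 := by
  have hpos : ∀ᶠ t in 𝓝 (0 : ℝ), ∀ i, 0 < p i + t * v i := by
    refine eventually_all.mpr fun i => ?_
    have : Tendsto (fun t : ℝ => p i + t * v i) (𝓝 0) (𝓝 (p i)) := by
      simpa using ((continuous_id.mul continuous_const).const_add (p i)).tendsto (0 : ℝ)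
    exact this.eventually (eventually_gt_nhds (hp i))
  have hlocmax : IsLocalMax (fun t => ∑ i, log (p i + t * v i)) 0 := by
    filter_upwards [hpos] with t ht
    simp only [zero_mul, add_zero]
    refine hmax _ ht ?_
    simp only [add_smul, sum_add_distrib, mul_smul, ← smul_sum, hv, smul_zero, add_zero]
  refine hlocmax.hasDerivAt_eq_zero (HasDerivAt.fun_sum fun i _ => ?_)
  have hlin : HasDerivAt (fun t : ℝ => p i + t * v i) (v i) 0 := by
    simpa using ((hasDerivAt_id (0 : ℝ)).mul_const (v i)).const_add (p i)
  simpa [div_eq_mul_inv] using hlin.log (by simpa using (hp i).ne')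

lemma exists_eq_inner_of_sum_mul_eq_zero [FiniteDimensional ℝ F] {w : ι → ℝ}
    (h : ∀ v : ι → ℝ, ∑ i, v i • b i = 0 → ∑ i, v i * w i = 0) :
    ∃ z : F, ∀ i, w i = ⟪b i, z⟫ := by
  classical
  have hmem : Fintype.linearCombination ℝ w ∈
      LinearMap.range (Fintype.linearCombination ℝ b).dualMap := by
    rw [LinearMap.range_dualMap_eq_dualAnnihilator_ker, Submodule.mem_dualAnnihilator]
    intro v hv
    simpa [Fintype.linearCombination_apply, mul_comm] using h v hv
  obtain ⟨ψ, hψ⟩ := hmem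
  refine ⟨(InnerProductSpace.toDual ℝ F).symm (LinearMap.toContinuousLinearMap ψ), fun i => ?_⟩
  rw [real_inner_comm, InnerProductSpace.toDual_symm_apply]
  simpa [Fintype.linearCombination_apply, Pi.single_apply] using
    (LinearMap.congr_fun hψ (Pi.single i 1)).symm

lemma exists_eq_dualWeight_of_isMax [FiniteDimensional ℝ F] {p : ι → ℝ} (hp : ∀ i, 0 < p i)
    (hmax : ∀ r : ι → ℝ, (∀ i, 0 < r i) → ∑ i, r i • b i = ∑ i, p i • b i →
      ∑ i, log (r i) ≤ ∑ i, log (p i)) :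
    ∃ z : F, (∀ i, 0 < ⟪b i, z⟫) ∧ p = dualWeight b z := by
  obtain ⟨z, hz⟩ := exists_eq_inner_of_sum_mul_eq_zero fun v hv =>
    sum_mul_inv_eq_zero_of_isMax hp hmax hv
  refine ⟨z, fun i => hz i ▸ inv_pos.mpr (hp i), funext fun i => ?_⟩
  rw [dualWeight, ← hz, inv_inv]

noncomputable def momentMapDeriv (b : ι → F) (z : F) : F →L[ℝ] F :=
  ∑ i, (-(⟪b i, z⟫ ^ 2)⁻¹ • innerSL ℝ (b i)).smulRight (b i)

lemma momentMapDeriv_apply (z δ : F) :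
    momentMapDeriv b z δ = ∑ i, (-(⟪b i, z⟫ ^ 2)⁻¹ * ⟪b i, δ⟫) • b i := by
  simp [momentMapDeriv]

lemma inner_momentMapDeriv (z δ w : F) :
    ⟪momentMapDeriv b z δ, w⟫ = -∑ i, ⟪b i, δ⟫ * ⟪b i, w⟫ / ⟪b i, z⟫ ^ 2 := by
  simp only [momentMapDeriv_apply, sum_inner, real_inner_smul_left, ← sum_neg_distrib]
  exact sum_congr rfl fun i _ => by ring

lemma injective_momentMapDeriv (hb : ∀ δ : F, (∀ i, ⟪b i, δ⟫ = 0) → δ = 0) {z : F}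
    (hz : ∀ i, ⟪b i, z⟫ ≠ 0) : Function.Injective (momentMapDeriv b z) := by
  refine (injective_iff_map_eq_zero _).mpr fun δ hδ => hb δ fun i => ?_
  have hsum : ∑ i : ι, ⟪b i, δ⟫ * ⟪b i, δ⟫ / ⟪b i, z⟫ ^ 2 = 0 := by
    simpa [hδ] using (inner_momentMapDeriv (b := b) z δ δ).symm
  have hnonneg : ∀ i ∈ univ, 0 ≤ ⟪b i, δ⟫ * ⟪b i, δ⟫ / ⟪b i, z⟫ ^ 2 := fun i _ =>
    div_nonneg (mul_self_nonneg _) (sq_nonneg _)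
  have := (sum_eq_zero_iff_of_nonneg hnonneg).mp hsum i (mem_univ i)
  simpa [hz i] using this

section Comp

variable {E : Type*} [NormedAddCommGroup E] [NormedSpace ℝ E] {Z : E → F} {Z' : E →L[ℝ] F}
  {y : E}

lemma hasFDerivAt_momentMap_comp (hZ : HasFDerivAt Z Z' y) (hz : ∀ i, ⟪b i, Z y⟫ ≠ 0) :
    HasFDerivAt (fun y => momentMap b (Z y)) ((momentMapDeriv b (Z y)).comp Z') y := by
  refine (HasFDerivAt.fun_sum fun i _ =>
    (hasFDerivAt_dualWeight_comp hZ (hz i)).smul_const (b i)).congr_fderiv ?_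
  ext ξ
  simp [momentMapDeriv]

lemma hasFDerivAt_sum_log_dualWeight_comp (hZ : HasFDerivAt Z Z' y)
    (hz : ∀ i, ⟪b i, Z y⟫ ≠ 0) :
    HasFDerivAt (fun y => ∑ i, log (dualWeight b (Z y) i))
      ((innerSL ℝ (Z y)).comp ((momentMapDeriv b (Z y)).comp Z')) y := by
  refine (HasFDerivAt.fun_sum fun i _ =>
    (hasFDerivAt_dualWeight_comp hZ (hz i)).log (inv_ne_zero (hz i))).congr_fderiv ?_
  ext ξ
  simp [dualWeight, momentMapDeriv_apply, inner_sum, real_inner_smul_right]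
  exact sum_congr rfl fun i _ => by rw [real_inner_comm (b i) (Z y)]; ring

lemma momentMapDeriv_comp_eq {ψ : E → F} {ψ' : E →L[ℝ] F} (hZ : HasFDerivAt Z Z' y)
    (hz : ∀ i, ⟪b i, Z y⟫ ≠ 0) (hψ : HasFDerivAt ψ ψ' y)
    (heq : (fun y => momentMap b (Z y)) =ᶠ[𝓝 y] ψ) :
    (momentMapDeriv b (Z y)).comp Z' = ψ' :=
  (hasFDerivAt_momentMap_comp hZ hz).unique (hψ.congr_of_eventuallyEq heq)

end Comp

lemma exists_localInverse_momentMap [FiniteDimensional ℝ F]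
    (hb : ∀ δ : F, (∀ i, ⟪b i, δ⟫ = 0) → δ = 0) {z₀ : F} (hz₀ : ∀ i, 0 < ⟪b i, z₀⟫) :
    ∃ g : F → F, ∀ᶠ w in 𝓝 (momentMap b z₀),
      DifferentiableAt ℝ g w ∧ (∀ i, 0 < ⟪b i, g w⟫) ∧ momentMap b (g w) = w := by
  have hne i : ⟪b i, z₀⟫ ≠ 0 := (hz₀ i).ne'
  have hG : ContDiffAt ℝ 1 (momentMap b) z₀ :=
    ContDiffAt.sum fun i _ => ((contDiffAt_const.inner ℝ contDiffAt_id).inv (hne i)).smul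
      contDiffAt_const
  let e := (LinearEquiv.ofInjectiveEndo (momentMapDeriv b z₀).toLinearMap
    (injective_momentMapDeriv hb hne)).toContinuousLinearEquiv
  have he : HasFDerivAt (momentMap b) (e : F →L[ℝ] F) z₀ :=
    hasFDerivAt_momentMap_comp (hasFDerivAt_id z₀) hne
  let g := hG.localInverse he one_ne_zero
  have hg : ContDiffAt ℝ 1 g (momentMap b z₀) := hG.to_localInverse he one_ne_zero
  have hpos i : ∀ᶠ w in 𝓝 (momentMap b z₀), 0 < ⟪b i, g w⟫ := by
    refine continuousAt_const.eventually_lt (continuousAt_const.inner hg.continuousAt) ?_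
    simpa only [g, hG.localInverse_apply_image he one_ne_zero] using hz₀ i
  refine ⟨g, ?_⟩
  filter_upwards [hg.eventually (by simp), eventually_all.mpr hpos,
    (hG.hasStrictFDerivAt' he one_ne_zero).eventually_right_inverse] with w hgw hposw hinv
  exact ⟨hgw.differentiableAt one_ne_zero, hposw, hinv⟩

theorem fderiv_fderiv_sum_log_dualWeight_comp {E : Type*} [NormedAddCommGroup E]
    [NormedSpace ℝ E] {Z ψ : E → F} {ψ' : E →L[ℝ] F} {x₀ : E} (hψ : ∀ y, HasFDerivAt ψ ψ' y)
    (hZ : ∀ᶠ y in 𝓝 x₀,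
      DifferentiableAt ℝ Z y ∧ (∀ i, ⟪b i, Z y⟫ ≠ 0) ∧ momentMap b (Z y) = ψ y) (ξ : E) :
    fderiv ℝ (fun y => fderiv ℝ (fun y => ∑ i, log (dualWeight b (Z y) i)) y ξ) x₀ ξ =
      -∑ k, (fderiv ℝ (fun y => dualWeight b (Z y) k) x₀ ξ) ^ 2 / (dualWeight b (Z x₀) k) ^ 2 := by
  have hfirst : (fun y => fderiv ℝ (fun y => ∑ i, log (dualWeight b (Z y) i)) y ξ) =ᶠ[𝓝 x₀]
      fun y => ⟪ψ' ξ, Z y⟫ := by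
    filter_upwards [hZ.eventually_nhds] with y hy
    obtain ⟨hd, hz, -⟩ := hy.self_of_nhds
    rw [(hasFDerivAt_sum_log_dualWeight_comp hd.hasFDerivAt hz).fderiv,
      momentMapDeriv_comp_eq hd.hasFDerivAt hz (hψ y) (hy.mono fun _ h => h.2.2),
      ContinuousLinearMap.comp_apply, innerSL_apply_apply, real_inner_comm]
  obtain ⟨hd, hz, -⟩ := hZ.self_of_nhds
  have hM := momentMapDeriv_comp_eq hd.hasFDerivAt hz (hψ x₀) (hZ.mono fun _ h => h.2.2)
  have hsecond : HasFDerivAt (fun y => ⟪ψ' ξ, Z y⟫)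
      ((innerSL ℝ (ψ' ξ)).comp (fderiv ℝ Z x₀)) x₀ :=
    (innerSL ℝ (ψ' ξ)).hasFDerivAt.comp x₀ hd.hasFDerivAt
  rw [hfirst.fderiv_eq, hsecond.fderiv, ContinuousLinearMap.comp_apply, innerSL_apply_apply, ← hM,
    ContinuousLinearMap.comp_apply, inner_momentMapDeriv]
  congr 1
  refine sum_congr rfl fun k _ => ?_
  rw [(hasFDerivAt_dualWeight_comp hd.hasFDerivAt (hz k)).fderiv]
  simp only [dualWeight, FunLike.coe_smul, Pi.smul_apply,
    ContinuousLinearMap.comp_apply, innerSL_apply_apply, smul_eq_mul]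
  field_simp [hz k]

end Barrier

section Homogenize

variable {E : Type*} [NormedAddCommGroup E] [InnerProductSpace ℝ E]

def homogenize (x : E) : WithLp 2 (ℝ × E) := WithLp.toLp 2 (1, x)

lemma inner_homogenize (x : E) (δ : WithLp 2 (ℝ × E)) :
    ⟪homogenize x, δ⟫ = δ.fst + ⟪x, δ.snd⟫ := by
  simp [homogenize]

lemma sum_smul_homogenize {ι : Type*} [Fintype ι] (r : ι → ℝ) (a : ι → E) :
    ∑ i, r i • homogenize (a i) = WithLp.toLp 2 (∑ i, r i, ∑ i, r i • a i) := by
  simp only [homogenize, ← WithLp.toLp_smul, ← WithLp.toLp_sum, Prod.smul_mk, smul_eq_mul,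
    mul_one]
  congr 1
  ext <;> simp [Prod.fst_sum, Prod.snd_sum]

lemma hasFDerivAt_homogenize (x : E) :
    HasFDerivAt homogenize
      ((WithLp.prodContinuousLinearEquiv 2 ℝ ℝ E).symm.toContinuousLinearMap ∘L
        ContinuousLinearMap.inr ℝ ℝ E) x := by
  have h : homogenize =
      fun x : E => homogenize 0 + (WithLp.prodContinuousLinearEquiv 2 ℝ ℝ E).symm (0, x) := by
    funext x
    simp [homogenize, ← WithLp.toLp_add]
  rw [h]
  exact (ContinuousLinearMap.hasFDerivAt
    ((WithLp.prodContinuousLinearEquiv 2 ℝ ℝ E).symm.toContinuousLinearMap ∘L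
      ContinuousLinearMap.inr ℝ ℝ E)).const_add _

lemma sum_smul_homogenize_eq_iff {ι : Type*} [Fintype ι] {r : ι → ℝ} {a : ι → E} {x : E} :
    ∑ i, r i • homogenize (a i) = homogenize x ↔ ∑ i, r i = 1 ∧ ∑ i, r i • a i = x := by
  rw [sum_smul_homogenize, homogenize, (WithLp.toLp_injective 2).eq_iff, Prod.mk.injEq]

lemma eq_zero_of_inner_homogenize_eq_zero [FiniteDimensional ℝ E] {ι : Type*} {a : ι → E}
    (ha : (interior (convexHull ℝ (Set.range a))).Nonempty) {δ : WithLp 2 (ℝ × E)}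
    (hδ : ∀ i, ⟪homogenize (a i), δ⟫ = 0) : δ = 0 := by
  obtain ⟨-, i₀, -⟩ : (Set.range a).Nonempty :=
    convexHull_nonempty_iff.mp (ha.mono interior_subset)
  have hspan := AffineSubspace.vectorSpan_eq_top_of_affineSpan_eq_top ℝ E E
    (interior_convexHull_nonempty_iff_affineSpan_eq_top.mp ha)
  rw [vectorSpan_range_eq_span_range_vsub_right ℝ a i₀] at hspan
  have hle : Submodule.span ℝ (Set.range fun i => a i -ᵥ a i₀) ≤
      LinearMap.ker (innerₛₗ ℝ δ.snd) := by
    rw [Submodule.span_le]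
    rintro _ ⟨i, rfl⟩
    have h1 := hδ i
    have h2 := hδ i₀
    rw [inner_homogenize, real_inner_comm] at h1 h2
    simp only [SetLike.mem_coe, LinearMap.mem_ker, innerₛₗ_apply_apply, vsub_eq_sub,
      inner_sub_right]
    linarith
  have hsnd : δ.snd = 0 := inner_self_eq_zero.mp (hle (hspan ▸ Submodule.mem_top))
  have hfst : δ.fst = 0 := by
    simpa only [inner_homogenize, hsnd, inner_zero_right, add_zero] using hδ i₀
  rw [← WithLp.ofLp_eq_zero]
  exact Prod.ext hfst hsnd

end Homogenize

section Entropy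

variable {d n : ℕ} {a : Fin n → EuclideanSpace ℝ (Fin d)} {x : EuclideanSpace ℝ (Fin d)}

lemma le_entropyU {r : Fin n → ℝ} (hr : ∀ i, 0 < r i)
    (h : ∑ i, r i • homogenize (a i) = homogenize x) : ∑ i, log (r i) ≤ entropyU a x := by
  obtain ⟨h1, h2⟩ := sum_smul_homogenize_eq_iff.mp h
  refine le_csSup ⟨0, ?_⟩ ⟨r, hr, h1, h2, rfl⟩
  rintro s ⟨r, hr, h1, -, rfl⟩
  exact sum_nonpos fun i _ =>
    log_nonpos (hr i).le (h1 ▸ single_le_sum (fun j _ => (hr j).le) (mem_univ i))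

lemma entropyU_eq_sum_log_dualWeight {z : WithLp 2 (ℝ × EuclideanSpace ℝ (Fin d))}
    (hz : ∀ i, 0 < ⟪homogenize (a i), z⟫)
    (hx : momentMap (fun i => homogenize (a i)) z = homogenize x) :
    entropyU a x = ∑ i, log (dualWeight (fun i => homogenize (a i)) z i) := by
  obtain ⟨h1, h2⟩ := sum_smul_homogenize_eq_iff.mp hx
  refine IsGreatest.csSup_eq ⟨⟨_, fun i => inv_pos.mpr (hz i), h1, h2, rfl⟩, ?_⟩
  rintro s ⟨r, hr, h1, h2, rfl⟩
  exact sum_log_le_sum_log_dualWeight hz hr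
    ((sum_smul_homogenize_eq_iff.mpr ⟨h1, h2⟩).trans hx.symm)

lemma exists_dual_parametrization_nhds {x₀ : EuclideanSpace ℝ (Fin d)}
    (hx₀ : x₀ ∈ interior (convexHull ℝ (Set.range a))) {p₀ : Fin n → ℝ} (hp₀ : ∀ i, 0 < p₀ i)
    (hfeas : ∑ i, p₀ i • homogenize (a i) = homogenize x₀)
    (hmax : ∑ i, log (p₀ i) = entropyU a x₀) :
    ∃ Z : EuclideanSpace ℝ (Fin d) → WithLp 2 (ℝ × EuclideanSpace ℝ (Fin d)),
      ∀ᶠ y in 𝓝 x₀, DifferentiableAt ℝ Z y ∧ (∀ i, 0 < ⟪homogenize (a i), Z y⟫) ∧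
        momentMap (fun i => homogenize (a i)) (Z y) = homogenize y := by
  obtain ⟨z₀, hz₀, rfl⟩ := exists_eq_dualWeight_of_isMax hp₀ fun r hr h =>
    hmax ▸ le_entropyU hr (h.trans hfeas)
  obtain ⟨g, hg⟩ := exists_localInverse_momentMap
    (fun _ => eq_zero_of_inner_homogenize_eq_zero ⟨x₀, hx₀⟩) hz₀
  have hmom : momentMap (fun i => homogenize (a i)) z₀ = homogenize x₀ := hfeas
  have ht : Tendsto homogenize (𝓝 x₀) (𝓝 (momentMap (fun i => homogenize (a i)) z₀)) :=
    hmom ▸ (hasFDerivAt_homogenize x₀).continuousAt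
  refine ⟨fun y => g (homogenize y), ?_⟩
  filter_upwards [ht.eventually hg] with y hy
  obtain ⟨hd, hpos, heq⟩ := hy
  exact ⟨hd.comp y (hasFDerivAt_homogenize y).differentiableAt, hpos, heq⟩

end Entropy

theorem stmt_12_general {d n : ℕ} (a : Fin n → EuclideanSpace ℝ (Fin d))
    (P : Set (EuclideanSpace ℝ (Fin d)))
    (hP : P = convexHull ℝ (Set.range a))
    (p : EuclideanSpace ℝ (Fin d) → Fin n → ℝ)
    (hp : ∀ x ∈ interior P, (∀ i, 0 < p x i) ∧ ∑ i, p x i = 1 ∧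
      ∑ i, p x i • a i = x ∧ ∑ i, Real.log (p x i) = entropyU a x) :
    ∀ x ∈ interior P, ∀ ξ : EuclideanSpace ℝ (Fin d),
      fderiv ℝ (fun y => fderiv ℝ (entropyU a) y ξ) x ξ
        = -∑ k, (fderiv ℝ (fun y => p y k) x ξ) ^ 2 / (p x k) ^ 2 := by
  subst hP
  intro x₀ hx₀ ξ
  set b := fun i => homogenize (a i)
  have hfeas : ∀ x ∈ interior (convexHull ℝ (Set.range a)), ∑ i, p x i • b i = homogenize x :=
    fun x hx => sum_smul_homogenize_eq_iff.mpr ⟨(hp x hx).2.1, (hp x hx).2.2.1⟩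
  obtain ⟨Z, hZ⟩ := exists_dual_parametrization_nhds hx₀ (hp x₀ hx₀).1 (hfeas x₀ hx₀)
    (hp x₀ hx₀).2.2.2
  have hloc : ∀ᶠ y in 𝓝 x₀, entropyU a y = ∑ i, log (dualWeight b (Z y) i) ∧
      p y = dualWeight b (Z y) := by
    filter_upwards [hZ, isOpen_interior.mem_nhds hx₀] with y hZy hy
    obtain ⟨-, hpos, heq⟩ := hZy
    have hU := entropyU_eq_sum_log_dualWeight hpos heq
    exact ⟨hU, eq_dualWeight_of_sum_log_eq hpos (hp y hy).1 ((hfeas y hy).trans heq.symm)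
      (hU ▸ (hp y hy).2.2.2)⟩
  have hU : entropyU a =ᶠ[𝓝 x₀] fun y => ∑ i, log (dualWeight b (Z y) i) :=
    hloc.mono fun y h => h.1
  have hDU : (fun y => fderiv ℝ (entropyU a) y ξ) =ᶠ[𝓝 x₀]
      fun y => fderiv ℝ (fun y => ∑ i, log (dualWeight b (Z y) i)) y ξ :=
    hU.fderiv.mono fun y h => DFunLike.congr_fun h ξ
  rw [hDU.fderiv_eq,
    fderiv_fderiv_sum_log_dualWeight_comp hasFDerivAt_homogenize
      (hZ.mono fun y h => ⟨h.1, fun i => (h.2.1 i).ne', h.2.2⟩), hloc.self_of_nhds.2]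
  congr 1
  refine sum_congr rfl fun k _ => ?_
  rw [Filter.EventuallyEq.fderiv_eq (hloc.mono fun y h => congrFun h.2 k)]

/-- Second directional derivative identity:
`U_{(ξ)(ξ)}(x) = -∑ₖ (p_{k(ξ)}(x))² / pₖ(x)²`. -/
theorem stmt_12 {d n : ℕ} (hn : 2 ≤ n) (a : Fin n → EuclideanSpace ℝ (Fin d))
    (ha : Function.Injective a)
    (P : Set (EuclideanSpace ℝ (Fin d)))
    (hP : P = convexHull ℝ (Set.range a))
    (hvert : ∀ i, a i ∈ Set.extremePoints ℝ P)
    (hint : (interior P).Nonempty)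
    (p : EuclideanSpace ℝ (Fin d) → Fin n → ℝ)
    (hp : ∀ x ∈ interior P, (∀ i, 0 < p x i) ∧ ∑ i, p x i = 1 ∧
      ∑ i, p x i • a i = x ∧ ∑ i, Real.log (p x i) = entropyU a x) :
    ∀ x ∈ interior P, ∀ ξ : EuclideanSpace ℝ (Fin d),
      fderiv ℝ (fun y => fderiv ℝ (entropyU a) y ξ) x ξ
        = -∑ k, (fderiv ℝ (fun y => p y k) x ξ) ^ 2 / (p x k) ^ 2 :=
  stmt_12_general a P hP p hp
end

section
/- For the entropy-maximizing weights $p_k$ on the interior of a polytope with vertices $a_1,\dots,a_n$: if $\xi = \sum_k q_k (a_k - x)$ for some real numbers $q_k$, then $\sum_k (p_{k(\xi)}(x))^2 / p_k(x)^2 \le (n+1) \sum_k q_k^2 / p_k(x)^2$. -/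
open Finset

/-!
Homogenise the constraints `∑ pₖ = 1`, `∑ pₖ aₖ = x` to `∑ pₖ vₖ = (1, x)` with `vₖ = (1, aₖ)`;
since the polytope has interior points, the `vₖ` span `ℝ × ℝᵈ`. By Lagrange multipliers the
maximiser is `pₖ = θ(vₖ)⁻¹` for a linear functional `θ`, and conversely Gibbs' inequality
`log t ≤ t - 1` shows that feasible weights of this form are the unique maximiser. The map
`θ ↦ ∑ₖ θ(vₖ)⁻¹ vₖ` has an injective, hence invertible, derivative, so by the inverse function
theorem `θ` depends differentiably on `x`, with `p_{k(ξ)} = -pₖ² θ'(vₖ)` and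
`∑ₖ p_{k(ξ)} vₖ = (0, ξ)`.

For `uₖ = p_{k(ξ)} / pₖ` and `σ = ∑ uₖ` these relations give `∑ pₖ uₖ = 0` and
`∑ uₖ² = ∑ (qₖ / pₖ)(uₖ - pₖ σ)`. By Cauchy–Schwarz the square of the right side is at most
`(∑ qₖ² / pₖ²) ∑ (uₖ - pₖ σ)²`, and `∑ (uₖ - pₖ σ)² = ∑ uₖ² + σ² ∑ pₖ² ≤ (n + 1) ∑ uₖ²`
because `∑ pₖ² ≤ 1` and `σ² ≤ n ∑ uₖ²`.
-/

open Filter Topology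

def feasibleWeights {ι V : Type*} [Fintype ι] [AddCommGroup V] [Module ℝ V] (v : ι → V) (m : V) :
    Set (ι → ℝ) :=
  {w | (∀ i, 0 < w i) ∧ ∑ i, w i • v i = m}

section
variable {ι V : Type*} [Fintype ι] [NormedAddCommGroup V] [NormedSpace ℝ V]

noncomputable def dualWeights (v : ι → V) (θ : StrongDual ℝ V) : ι → ℝ := fun k => (θ (v k))⁻¹

theorem eq_dualWeights_of_isMaxOn {v : ι → V} {m : V} {θ : StrongDual ℝ V} {w : ι → ℝ}
    (hθ : ∀ k, 0 < θ (v k)) (hθm : ∑ k, dualWeights v θ k • v k = m)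
    (hw : w ∈ feasibleWeights v m)
    (hmax : IsMaxOn (fun w => ∑ i, Real.log (w i)) (feasibleWeights v m) w) :
    w = dualWeights v θ := by
  have ht : ∀ k, 0 < w k * θ (v k) := fun k => mul_pos (hw.1 k) (hθ k)
  have hsum : ∑ k, (w k * θ (v k) - 1) = 0 := by
    have h1 : ∑ k, w k * θ (v k) = θ m := by simp [← hw.2, map_sum]
    have h2 : θ m = ∑ _k : ι, (1 : ℝ) := by
      simp [← hθm, map_sum, dualWeights, inv_mul_cancel₀ (hθ _).ne']
    rw [sum_sub_distrib, h1, h2, sub_self]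
  have hlog : 0 ≤ ∑ k, Real.log (w k * θ (v k)) := by
    have := isMaxOn_iff.1 hmax _ ⟨fun k => inv_pos.2 (hθ k), hθm⟩
    simp only [Real.log_inv, sum_neg_distrib] at this
    simp only [Real.log_mul (hw.1 _).ne' (hθ _).ne', sum_add_distrib]
    linarith
  by_contra hne
  obtain ⟨k, hk⟩ := Function.ne_iff.1 hne
  have hk1 : w k * θ (v k) ≠ 1 := fun h => hk (eq_inv_of_mul_eq_one_left h)
  have := sum_lt_sum (fun k _ => Real.log_le_sub_one_of_pos (ht k))
    ⟨k, mem_univ k, Real.log_lt_sub_one_of_pos (ht k) hk1⟩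
  linarith

theorem exists_eq_dualWeights_of_isMaxOn [FiniteDimensional ℝ V] {v : ι → V} {m : V}
    {w : ι → ℝ} (hspan : Submodule.span ℝ (Set.range v) = ⊤) (hw : w ∈ feasibleWeights v m)
    (hmax : IsMaxOn (fun w => ∑ i, Real.log (w i)) (feasibleWeights v m) w) :
    ∃ θ : StrongDual ℝ V, w = dualWeights v θ := by
  classical
  set f : (ι → ℝ) →L[ℝ] V := LinearMap.toContinuousLinearMap (Fintype.linearCombination ℝ v)
  have hf : ∀ w, f w = ∑ i, w i • v i := Fintype.linearCombination_apply ℝ v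
  have hφ : HasStrictFDerivAt (fun w : ι → ℝ => ∑ i, Real.log (w i))
      (∑ k, (w k)⁻¹ • ContinuousLinearMap.proj k) w :=
    HasStrictFDerivAt.fun_sum fun k _ =>
      ((Real.hasStrictDerivAt_log (hw.1 k).ne').comp_hasStrictFDerivAt w
        (hasStrictFDerivAt_apply (𝕜 := ℝ) (F' := fun _ : ι => ℝ) k w) :)
  have hextr : IsLocalExtrOn (fun w => ∑ i, Real.log (w i)) {w' | f w' = f w} w := by
    have hU : Set.univ.pi (fun _ => Set.Ioi 0) ∈ 𝓝 w :=
      (isOpen_set_pi Set.finite_univ fun _ _ => isOpen_Ioi).mem_nhds fun i _ => hw.1 i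
    refine Or.inr ?_
    filter_upwards [nhdsWithin_le_nhds hU, self_mem_nhdsWithin] with w' hpos hw'
    refine isMaxOn_iff.1 hmax w' ⟨fun i => hpos i (Set.mem_univ i), ?_⟩
    rwa [hf, hf, hw.2] at hw'
  obtain ⟨Λ, Λ₀, hne, hΛ⟩ := hextr.exists_linear_map_of_hasStrictFDerivAt f.hasStrictFDerivAt hφ
  have hk : ∀ k, Λ (v k) + Λ₀ * (w k)⁻¹ = 0 := fun k => by
    simpa [hf, Pi.single_apply] using hΛ (Pi.single k 1)
  have hΛ₀ : Λ₀ ≠ 0 := by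
    rintro rfl
    exact hne (Prod.ext (LinearMap.ext_on_range hspan fun k => by simpa using hk k) rfl)
  refine ⟨LinearMap.toContinuousLinearMap (-Λ₀⁻¹ • Λ), funext fun k => ?_⟩
  simp only [dualWeights, LinearMap.coe_toContinuousLinearMap', LinearMap.smul_apply, smul_eq_mul,
    eq_neg_of_add_eq_zero_left (hk k)]
  field_simp

theorem injective_sum_smul_apply_smulRight {v : ι → V}
    (hspan : Submodule.span ℝ (Set.range v) = ⊤) {c : ι → ℝ} (hc : ∀ k, c k < 0) :
    Function.Injective
      (∑ k, (c k • ContinuousLinearMap.apply ℝ ℝ (v k)).smulRight (v k) :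
        StrongDual ℝ V →L[ℝ] V) := by
  refine (injective_iff_map_eq_zero _).2 fun θ hθ => ?_
  have hsum : ∑ k, c k * θ (v k) ^ 2 = 0 := by
    have := congrArg θ hθ
    simp only [FunLike.coe_sum, Finset.sum_apply, ContinuousLinearMap.smulRight_apply,
      smul_apply, ContinuousLinearMap.apply_apply, map_sum, map_smul,
      smul_eq_mul, map_zero] at this
    rw [← this]
    exact sum_congr rfl fun k _ => by ring
  have hθv : ∀ k, θ (v k) = 0 := fun k => by
    have := (sum_eq_zero_iff_of_nonpos fun j _ =>
      mul_nonpos_of_nonpos_of_nonneg (hc j).le (sq_nonneg (θ (v j)))).1 hsum k (mem_univ k)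
    simpa [(hc k).ne] using this
  exact ContinuousLinearMap.coe_injective
    (LinearMap.ext_on_range hspan fun k => by simpa using hθv k)

theorem exists_hasStrictFDerivAt_equiv_sum_dualWeights_smul [FiniteDimensional ℝ V] {v : ι → V}
    (hspan : Submodule.span ℝ (Set.range v) = ⊤) {θ : StrongDual ℝ V} (hθ : ∀ k, θ (v k) ≠ 0) :
    ∃ D : StrongDual ℝ V ≃L[ℝ] V,
      HasStrictFDerivAt (fun θ => ∑ k, dualWeights v θ k • v k) (D : StrongDual ℝ V →L[ℝ] V) θ := by
  set D := ∑ k, (-(θ (v k) ^ 2)⁻¹ • ContinuousLinearMap.apply ℝ ℝ (v k)).smulRight (v k)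
  have hD : HasStrictFDerivAt (fun θ => ∑ k, dualWeights v θ k • v k) D θ :=
    HasStrictFDerivAt.fun_sum fun k _ => ((hasStrictDerivAt_inv (hθ k)).comp_hasStrictFDerivAt θ
      (ContinuousLinearMap.apply ℝ ℝ (v k)).hasStrictFDerivAt).smul_const (v k)
  have hinj : Function.Injective D :=
    injective_sum_smul_apply_smulRight hspan fun k =>
      neg_lt_zero.2 (inv_pos.2 (sq_pos_of_ne_zero (hθ k)))
  have hrank : Module.finrank ℝ (StrongDual ℝ V) = Module.finrank ℝ V :=
    LinearMap.toContinuousLinearMap.finrank_eq.symm.trans Subspace.dual_finrank_eq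
  exact ⟨(LinearEquiv.ofInjectiveOfFinrankEq D.toLinearMap hinj hrank).toContinuousLinearEquiv, hD⟩

variable {F : Type*} [NormedAddCommGroup F] [NormedSpace ℝ F]

theorem exists_differentiableAt_eventually_eq_dualWeights [FiniteDimensional ℝ V] {v : ι → V}
    (hspan : Submodule.span ℝ (Set.range v) = ⊤) {m : F → V} {x : F}
    (hm : DifferentiableAt ℝ m x) {p : F → ι → ℝ}
    (hp : ∀ᶠ y in 𝓝 x, p y ∈ feasibleWeights v (m y) ∧
      IsMaxOn (fun w => ∑ i, Real.log (w i)) (feasibleWeights v (m y)) (p y)) :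
    ∃ Θ : F → StrongDual ℝ V, DifferentiableAt ℝ Θ x ∧ ∀ᶠ y in 𝓝 x, p y = dualWeights v (Θ y) := by
  obtain ⟨hpx, hmaxx⟩ := hp.self_of_nhds
  obtain ⟨θ, hθ⟩ := exists_eq_dualWeights_of_isMaxOn hspan hpx hmaxx
  have hθpos : ∀ k, 0 < θ (v k) := fun k => by
    have := hpx.1 k
    rw [hθ] at this
    exact inv_pos.1 this
  have hGθ : ∑ k, dualWeights v θ k • v k = m x := by rw [← hpx.2, hθ]
  obtain ⟨D, hD⟩ := exists_hasStrictFDerivAt_equiv_sum_dualWeights_smul hspan fun k => (hθpos k).ne'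
  set Ψ := hD.localInverse _ D θ
  have hΨ : HasStrictFDerivAt Ψ (D.symm : V →L[ℝ] StrongDual ℝ V) (m x) := by
    rw [← hGθ]; exact hD.to_localInverse
  have hright : ∀ᶠ z in 𝓝 (m x), ∑ k, dualWeights v (Ψ z) k • v k = z := by
    rw [← hGθ]; exact hD.eventually_right_inverse
  have hΨθ : Ψ (m x) = θ := by
    rw [← hGθ]; exact hD.localInverse_apply_image
  have hΘ : DifferentiableAt ℝ (Ψ ∘ m) x := hΨ.hasFDerivAt.differentiableAt.comp x hm
  refine ⟨Ψ ∘ m, hΘ, ?_⟩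
  have hpos : ∀ᶠ y in 𝓝 x, ∀ k, 0 < Ψ (m y) (v k) := eventually_all.2 fun k =>
    ((ContinuousLinearMap.apply ℝ ℝ (v k)).continuous.continuousAt.comp hΘ.continuousAt).eventually
      (eventually_gt_nhds (by simpa [hΨθ] using hθpos k))
  filter_upwards [hp, hm.continuousAt.eventually hright, hpos] with y ⟨hpy, hmaxy⟩ hGy hposy
  exact eq_dualWeights_of_isMaxOn hposy hGy hpy hmaxy

omit [Fintype ι] in
theorem hasFDerivAt_of_eventually_eq_dualWeights {v : ι → V} {Θ : F → StrongDual ℝ V}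
    {Θ' : F →L[ℝ] StrongDual ℝ V} {p : F → ι → ℝ} {x : F} {k : ι} (hΘ : HasFDerivAt Θ Θ' x)
    (hp : ∀ᶠ y in 𝓝 x, p y = dualWeights v (Θ y)) (hpx : p x k ≠ 0) :
    HasFDerivAt (fun y => p y k)
      (-(p x k ^ 2) • (ContinuousLinearMap.apply ℝ ℝ (v k)).comp Θ') x := by
  have hpk : p x k = (Θ x (v k))⁻¹ := congrFun hp.self_of_nhds k
  have hne : Θ x (v k) ≠ 0 := fun h => hpx (by simp [hpk, h])
  have := (hasDerivAt_inv hne).comp_hasFDerivAt x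
    ((ContinuousLinearMap.apply ℝ ℝ (v k)).hasFDerivAt.comp x hΘ)
  rw [hpk, inv_pow]
  exact this.congr_of_eventuallyEq (hp.mono fun y hy => congrFun hy k)

theorem sum_smul_eq_of_hasFDerivAt {v : ι → V} {p : F → ι → ℝ} {p' : ι → F →L[ℝ] ℝ}
    {m : F → V} {m' : F →L[ℝ] V} {x : F} (hp : ∀ k, HasFDerivAt (fun y => p y k) (p' k) x)
    (hm : HasFDerivAt m m' x) (hpm : ∀ᶠ y in 𝓝 x, ∑ k, p y k • v k = m y) (ξ : F) :
    ∑ k, p' k ξ • v k = m' ξ := by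
  have h := HasFDerivAt.fun_sum fun k (_ : k ∈ univ) => (hp k).smul_const (v k)
  have := h.unique (hm.congr_of_eventuallyEq hpm)
  simpa using congrArg (· ξ) this

end

theorem span_range_one_prod_eq_top {k E ι : Type*} [Ring k] [AddCommGroup E] [Module k E]
    {a : ι → E} (h : affineSpan k (Set.range a) = ⊤) :
    Submodule.span k (Set.range fun i => ((1 : k), a i)) = ⊤ := by
  set W := Submodule.span k (Set.range fun i => ((1 : k), a i))
  have hmem : ∀ z, ((1 : k), z) ∈ W := fun z => by
    refine affineSpan_induction (p := fun z => ((1 : k), z) ∈ W)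
      (h ▸ AffineSubspace.mem_top k E z) ?_ ?_
    · rintro _ ⟨i, rfl⟩
      exact Submodule.subset_span ⟨i, rfl⟩
    · intro c u v w hu hv hw
      convert W.add_mem (W.smul_mem c (W.sub_mem hu hv)) hw using 1
      ext <;> simp
  refine Submodule.eq_top_iff'.2 fun ⟨t, z⟩ => ?_
  convert W.add_mem (W.smul_mem t (hmem 0)) (W.sub_mem (hmem z) (hmem 0)) using 1
  ext <;> simp

section
variable {ι : Type*} [Fintype ι]

theorem sum_sq_le_card_add_one_mul {p q u : ι → ℝ} (hp : ∀ k, 0 ≤ p k) (hp1 : ∑ k, p k = 1)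
    (hpu : ∑ k, p k * u k = 0)
    (hu : ∑ k, u k ^ 2 = ∑ k, q k / p k * (u k - p k * ∑ j, u j)) :
    ∑ k, u k ^ 2 ≤ (Fintype.card ι + 1) * ∑ k, q k ^ 2 / p k ^ 2 := by
  have hσ : (∑ j, u j) ^ 2 ≤ Fintype.card ι * ∑ k, u k ^ 2 := by
    simpa using sq_sum_le_card_mul_sum_sq (s := univ) (f := u)
  have hpp : ∑ k, p k ^ 2 ≤ 1 := by
    rw [← one_pow 2, ← hp1]
    exact sum_sq_le_sq_sum_of_nonneg fun k _ => hp k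
  set S := ∑ k, u k ^ 2 with hS
  set σ := ∑ j, u j
  set Q := ∑ k, q k ^ 2 / p k ^ 2
  clear_value σ
  have hdev : ∑ k, (u k - p k * σ) ^ 2 ≤ (Fintype.card ι + 1) * S := by
    have : ∑ k, (u k - p k * σ) ^ 2 = S - 2 * σ * ∑ k, p k * u k + σ ^ 2 * ∑ k, p k ^ 2 := by
      rw [hS, mul_sum, mul_sum, ← sum_sub_distrib, ← sum_add_distrib]
      exact sum_congr rfl fun k _ => by ring
    rw [this, hpu]
    nlinarith [mul_le_mul_of_nonneg_left hpp (sq_nonneg σ)]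
  have hCS : S * S ≤ ((Fintype.card ι + 1) * Q) * S :=
    calc S * S = (∑ k, q k / p k * (u k - p k * σ)) ^ 2 := by rw [← hu, sq]
      _ ≤ (∑ k, (q k / p k) ^ 2) * ∑ k, (u k - p k * σ) ^ 2 := sum_mul_sq_le_sq_mul_sq _ _ _
      _ ≤ Q * ((Fintype.card ι + 1) * S) := by simp only [div_pow, Q]; gcongr
      _ = _ := by ring
  rcases (show 0 ≤ S from sum_nonneg fun k _ => sq_nonneg (u k)).eq_or_lt with hS0 | hS0
  · rw [← hS0]; positivity
  · exact le_of_mul_le_mul_right hCS hS0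

theorem sum_sq_eq_sum_div_mul {V : Type*} [AddCommGroup V] [Module ℝ V] (θ : Module.Dual ℝ V)
    {v : ι → V} {p c q : ι → ℝ} (hp : ∀ k, p k ≠ 0) (hc : ∀ k, c k = -(p k ^ 2 * θ (v k)))
    (hcv : ∑ k, c k • v k = ∑ k, q k • (v k - ∑ j, p j • v j)) :
    ∑ k, (c k / p k) ^ 2 = ∑ k, q k / p k * (c k / p k - p k * ∑ j, c j / p j) := by
  have hθv : ∀ k, θ (v k) = -(c k / p k / p k) := fun k => by
    rw [hc]; field_simp [hp k]
  have hθm : θ (∑ j, p j • v j) = -∑ j, c j / p j := by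
    simp only [map_sum, map_smul, hθv, smul_eq_mul, ← sum_neg_distrib]
    exact sum_congr rfl fun j _ => by field_simp [hp j]
  calc ∑ k, (c k / p k) ^ 2 = -θ (∑ k, c k • v k) := by
        simp only [map_sum, map_smul, hθv, smul_eq_mul, ← sum_neg_distrib]
        exact sum_congr rfl fun k _ => by field_simp [hp k]
    _ = _ := by
        simp only [hcv, map_sum, map_smul, map_sub, hθm, hθv, smul_eq_mul]
        rw [← sum_neg_distrib]
        exact sum_congr rfl fun k _ => by field_simp [hp k]; ring

theorem sum_sq_div_sq_le {V : Type*} [AddCommGroup V] [Module ℝ V] (θ : Module.Dual ℝ V)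
    {v : ι → V} {p c q : ι → ℝ} (hp : ∀ k, 0 < p k) (hp1 : ∑ k, p k = 1) (hc0 : ∑ k, c k = 0)
    (hc : ∀ k, c k = -(p k ^ 2 * θ (v k)))
    (hcv : ∑ k, c k • v k = ∑ k, q k • (v k - ∑ j, p j • v j)) :
    ∑ k, c k ^ 2 / p k ^ 2 ≤ (Fintype.card ι + 1) * ∑ k, q k ^ 2 / p k ^ 2 := by
  have hu : ∑ k, c k ^ 2 / p k ^ 2 = ∑ k, (c k / p k) ^ 2 := by simp only [div_pow]
  rw [hu]
  refine sum_sq_le_card_add_one_mul (fun k => (hp k).le) hp1 ?_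
    (sum_sq_eq_sum_div_mul θ (fun k => (hp k).ne') hc hcv)
  simpa [mul_div_cancel₀ _ (hp _).ne'] using hc0

end

theorem mem_feasibleWeights_one_prod_iff {ι E : Type*} [Fintype ι] [AddCommGroup E] [Module ℝ E]
    {a : ι → E} {y : E} {w : ι → ℝ} :
    w ∈ feasibleWeights (fun i => ((1 : ℝ), a i)) (1, y) ↔
      (∀ i, 0 < w i) ∧ ∑ i, w i = 1 ∧ ∑ i, w i • a i = y := by
  simp [feasibleWeights, Prod.ext_iff, Prod.fst_sum, Prod.snd_sum]

theorem sum_log_le_entropyU_s13 {d n : ℕ} {a : Fin n → EuclideanSpace ℝ (Fin d)}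
    {y : EuclideanSpace ℝ (Fin d)} {w : Fin n → ℝ}
    (hw : w ∈ feasibleWeights (fun i => ((1 : ℝ), a i)) (1, y)) :
    ∑ i, Real.log (w i) ≤ entropyU a y := by
  obtain ⟨hpos, h1, ha⟩ := mem_feasibleWeights_one_prod_iff.1 hw
  refine le_csSup ⟨0, ?_⟩ ⟨w, hpos, h1, ha, rfl⟩
  rintro s ⟨w', hpos', h1', -, rfl⟩
  exact sum_nonpos fun i _ => Real.log_nonpos (hpos' i).le
    (h1' ▸ single_le_sum (fun j _ => (hpos' j).le) (mem_univ i))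

theorem isMaxOn_of_sum_log_eq_entropyU {d n : ℕ} {a : Fin n → EuclideanSpace ℝ (Fin d)}
    {y : EuclideanSpace ℝ (Fin d)} {w : Fin n → ℝ}
    (hU : ∑ i, Real.log (w i) = entropyU a y) :
    IsMaxOn (fun w => ∑ i, Real.log (w i)) (feasibleWeights (fun i => ((1 : ℝ), a i)) (1, y)) w :=
  isMaxOn_iff.2 fun _ hw' => (sum_log_le_entropyU_s13 hw').trans_eq hU.symm

theorem stmt_13_general {d n : ℕ} (a : Fin n → EuclideanSpace ℝ (Fin d))
    (P : Set (EuclideanSpace ℝ (Fin d)))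
    (hP : P = convexHull ℝ (Set.range a))
    (hint : (interior P).Nonempty)
    (p : EuclideanSpace ℝ (Fin d) → Fin n → ℝ)
    (hp : ∀ x ∈ interior P, (∀ i, 0 < p x i) ∧ ∑ i, p x i = 1 ∧
      ∑ i, p x i • a i = x ∧ ∑ i, Real.log (p x i) = entropyU a x) :
    ∀ x ∈ interior P, ∀ q : Fin n → ℝ, ∀ ξ : EuclideanSpace ℝ (Fin d),
      ξ = ∑ k, q k • (a k - x) →
      ∑ k, (fderiv ℝ (fun y => p y k) x ξ) ^ 2 / (p x k) ^ 2
        ≤ ((n : ℝ) + 1) * ∑ k, (q k) ^ 2 / (p x k) ^ 2 := by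
  intro x hx q ξ hξ
  set v : Fin n → ℝ × EuclideanSpace ℝ (Fin d) := fun k => (1, a k)
  have hspan : Submodule.span ℝ (Set.range v) = ⊤ := by
    refine span_range_one_prod_eq_top ?_
    rw [← affineSpan_convexHull, ← hP]
    exact (hP ▸ convex_convexHull ℝ _ : Convex ℝ P).interior_nonempty_iff_affineSpan_eq_top.1 hint
  have hmax : ∀ᶠ y in 𝓝 x, p y ∈ feasibleWeights v (1, y) ∧
      IsMaxOn (fun w => ∑ i, Real.log (w i)) (feasibleWeights v (1, y)) (p y) := by
    filter_upwards [isOpen_interior.mem_nhds hx] with y hy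
    obtain ⟨hpos, h1, ha, hU⟩ := hp y hy
    exact ⟨mem_feasibleWeights_one_prod_iff.2 ⟨hpos, h1, ha⟩, isMaxOn_of_sum_log_eq_entropyU hU⟩
  have hm : HasFDerivAt (fun y => ((1 : ℝ), y)) (ContinuousLinearMap.inr ℝ ℝ _) x :=
    (hasFDerivAt_const _ _).prodMk (hasFDerivAt_id _)
  obtain ⟨Θ, hΘ, hpΘ⟩ :=
    exists_differentiableAt_eventually_eq_dualWeights hspan hm.differentiableAt hmax
  obtain ⟨hpos, hpv⟩ := hmax.self_of_nhds.1
  have hderiv k := hasFDerivAt_of_eventually_eq_dualWeights hΘ.hasFDerivAt hpΘ (hpos k).ne'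
  have hcv := sum_smul_eq_of_hasFDerivAt (fun k => (hderiv k).differentiableAt.hasFDerivAt) hm
    (hmax.mono fun y hy => hy.1.2) ξ
  have key := sum_sq_div_sq_le (fderiv ℝ Θ x ξ).toLinearMap (v := v) (q := q) hpos (hp x hx).2.1
    (by simpa [v, Prod.fst_sum] using congrArg Prod.fst hcv)
    (fun k => by simp [(hderiv k).fderiv])
    (by rw [hcv, hpv, hξ]; simp [v, Prod.ext_iff, Prod.fst_sum, Prod.snd_sum, smul_sub])
  simpa using key

/-- If `ξ = ∑ₖ qₖ (aₖ - x)`, then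
`∑ₖ (p_{k(ξ)}(x))²/pₖ(x)² ≤ (n+1) ∑ₖ qₖ²/pₖ(x)²`. -/
theorem stmt_13 {d n : ℕ} (hn : 2 ≤ n) (a : Fin n → EuclideanSpace ℝ (Fin d))
    (ha : Function.Injective a)
    (P : Set (EuclideanSpace ℝ (Fin d)))
    (hP : P = convexHull ℝ (Set.range a))
    (hvert : ∀ i, a i ∈ Set.extremePoints ℝ P)
    (hint : (interior P).Nonempty)
    (p : EuclideanSpace ℝ (Fin d) → Fin n → ℝ)
    (hp : ∀ x ∈ interior P, (∀ i, 0 < p x i) ∧ ∑ i, p x i = 1 ∧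
      ∑ i, p x i • a i = x ∧ ∑ i, Real.log (p x i) = entropyU a x) :
    ∀ x ∈ interior P, ∀ q : Fin n → ℝ, ∀ ξ : EuclideanSpace ℝ (Fin d),
      ξ = ∑ k, q k • (a k - x) →
      ∑ k, (fderiv ℝ (fun y => p y k) x ξ) ^ 2 / (p x k) ^ 2
        ≤ ((n : ℝ) + 1) * ∑ k, (q k) ^ 2 / (p x k) ^ 2 :=
  stmt_13_general a P hP hint p hp
end
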